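/- arXiv:1005.1275 — 10 statements merged into one kernel-verified Lean document; each statement's English description precedes it below -/
import Mathlib

section
/- Let Ψ be an irreducible root system with highest root ρ. If β₁, β₂, β₃, β₄ are mutually orthogonal roots each satisfying ⟨βᵢ, ρ⟩ = 1, then β₁ + β₂ + β₃ + β₄ = 2ρ. -/
open scoped RealInnerProductSpace

/-- An irreducible (reduced, crystallographic) root system together with a base
and the highest root `ρ` with respect to that base. -/
structure BasedRootSystem (ι V : Type*) [Fintype ι]
    [NormedAddCommGroup V] [InnerProductSpace ℝ V] where
  Ψ : Set V
  base : ι → V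
  ρ : V
  finite : Ψ.Finite
  ne_zero : ∀ β ∈ Ψ, β ≠ 0
  neg_mem : ∀ β ∈ Ψ, -β ∈ Ψ
  base_mem : ∀ i, base i ∈ Ψ
  reduced : ∀ β ∈ Ψ, ∀ t : ℝ, t • β ∈ Ψ → t = 1 ∨ t = -1
  cartanInt : ∀ β ∈ Ψ, ∀ γ ∈ Ψ, ∃ n : ℤ, 2 * ⟪β, γ⟫ / ⟪γ, γ⟫ = (n : ℝ)
  reflect_mem : ∀ β ∈ Ψ, ∀ γ ∈ Ψ, β - (2 * ⟪β, γ⟫ / ⟪γ, γ⟫) • γ ∈ Ψ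
  irreducible : ∀ S₁ S₂ : Set V, (∀ β ∈ Ψ, β ∈ S₁ ∨ β ∈ S₂) →
    (∀ x ∈ S₁, ∀ y ∈ S₂, ⟪x, y⟫ = 0) → (∀ β ∈ Ψ, β ∈ S₁) ∨ (∀ β ∈ Ψ, β ∈ S₂)
  base_pos : ∀ β ∈ Ψ, (∃ c : ι → ℕ, β = ∑ i, (c i : ℝ) • base i) ∨
    (∃ c : ι → ℕ, β = -∑ i, (c i : ℝ) • base i)
  rho_mem : ρ ∈ Ψ
  rho_highest : ∀ β ∈ Ψ, ∃ c : ι → ℕ, ρ - β = ∑ i, (c i : ℝ) • base i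

namespace BasedRootSystem

variable {ι V : Type*} [Fintype ι] [NormedAddCommGroup V] [InnerProductSpace ℝ V]

/-- The Cartan pairing `⟨β, γ⟩ = 2(β,γ)/(γ,γ)`. -/
noncomputable def pair (_S : BasedRootSystem ι V) (β γ : V) : ℝ :=
  2 * ⟪β, γ⟫ / ⟪γ, γ⟫

/-- A root is long if it has the same length as the highest root. -/
def IsLong (S : BasedRootSystem ι V) (β : V) : Prop := ⟪β, β⟫ = ⟪S.ρ, S.ρ⟫

end BasedRootSystem

/-- Four mutually orthogonal roots of α-height 1 sum to 2ρ. -/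
theorem stmt2 {ι V : Type*} [Fintype ι] [NormedAddCommGroup V] [InnerProductSpace ℝ V]
    (S : BasedRootSystem ι V) (β : Fin 4 → V) (hβ : ∀ i, β i ∈ S.Ψ)
    (hht : ∀ i, S.pair (β i) S.ρ = 1)
    (horth : ∀ i j, i ≠ j → ⟪β i, β j⟫ = 0) :
    β 0 + β 1 + β 2 + β 3 = (2 : ℝ) • S.ρ := by
  have hρ0 : ⟪S.ρ, S.ρ⟫ ≠ 0 := by
    simpa [inner_self_eq_zero] using S.ne_zero S.ρ S.rho_mem
  have hρpos : (0 : ℝ) < ⟪S.ρ, S.ρ⟫ :=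
    real_inner_self_nonneg.lt_of_ne' hρ0
  -- ⟪βᵢ, ρ⟫ = ‖ρ‖²/2
  have hβρ : ∀ i, 2 * ⟪β i, S.ρ⟫ = ⟪S.ρ, S.ρ⟫ := by
    intro i
    have h := hht i
    unfold BasedRootSystem.pair at h
    field_simp at h
    linarith
  -- each βᵢ is no longer than ρ
  have hlen : ∀ i, ⟪β i, β i⟫ ≤ ⟪S.ρ, S.ρ⟫ := by
    intro i
    have hβ0 : ⟪β i, β i⟫ ≠ 0 := by
      simpa [inner_self_eq_zero] using S.ne_zero (β i) (hβ i)
    have hβpos : (0 : ℝ) < ⟪β i, β i⟫ := real_inner_self_nonneg.lt_of_ne' hβ0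
    obtain ⟨n, hn⟩ := S.cartanInt S.ρ S.rho_mem (β i) (hβ i)
    have hinner : ⟪S.ρ, β i⟫ = ⟪S.ρ, S.ρ⟫ / 2 := by
      rw [real_inner_comm]; linarith [hβρ i]
    rw [hinner] at hn
    have hnval : (n : ℝ) * ⟪β i, β i⟫ = ⟪S.ρ, S.ρ⟫ := by
      field_simp at hn
      linarith
    have hnpos : (0 : ℝ) < (n : ℝ) := by
      by_contra h
      push_neg at h
      nlinarith
    have hn1 : (1 : ℝ) ≤ (n : ℝ) := by
      exact_mod_cast (by exact_mod_cast hnpos : (0 : ℤ) < n)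
    nlinarith
  -- the difference vector has nonpositive norm squared
  set d : V := (2 : ℝ) • S.ρ - (β 0 + β 1 + β 2 + β 3) with hd
  have hdd : ⟪d, d⟫ ≤ 0 := by
    have h01 := horth 0 1 (by decide)
    have h02 := horth 0 2 (by decide)
    have h03 := horth 0 3 (by decide)
    have h12 := horth 1 2 (by decide)
    have h13 := horth 1 3 (by decide)
    have h23 := horth 2 3 (by decide)
    have h10 := horth 1 0 (by decide)
    have h20 := horth 2 0 (by decide)
    have h30 := horth 3 0 (by decide)
    have h21 := horth 2 1 (by decide)
    have h31 := horth 3 1 (by decide)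
    have h32 := horth 3 2 (by decide)
    have hr0 : ⟪S.ρ, β 0⟫ = ⟪β 0, S.ρ⟫ := real_inner_comm _ _
    have hr1 : ⟪S.ρ, β 1⟫ = ⟪β 1, S.ρ⟫ := real_inner_comm _ _
    have hr2 : ⟪S.ρ, β 2⟫ = ⟪β 2, S.ρ⟫ := real_inner_comm _ _
    have hr3 : ⟪S.ρ, β 3⟫ = ⟪β 3, S.ρ⟫ := real_inner_comm _ _
    simp only [hd, inner_sub_left, inner_sub_right, inner_add_left, inner_add_right,
      real_inner_smul_left, real_inner_smul_right]
    have e0 := hβρ 0; have e1 := hβρ 1; have e2 := hβρ 2; have e3 := hβρ 3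
    have l0 := hlen 0; have l1 := hlen 1; have l2 := hlen 2; have l3 := hlen 3
    linarith
  have hd0 : d = 0 := by
    have := real_inner_self_nonneg (x := d)
    have : ⟪d, d⟫ = 0 := le_antisymm hdd this
    exact inner_self_eq_zero.1 this
  have : (2 : ℝ) • S.ρ - (β 0 + β 1 + β 2 + β 3) = 0 := hd0
  linear_combination (norm := abel) -this
end

section
/- Let Ψ be an irreducible root system with highest root ρ. If β₁, β₂, β₃, β₄ are four mutually orthogonal roots each with ⟨βᵢ, ρ⟩ = 1, then each βᵢ is a long root, i.e., (βᵢ, βᵢ) = (ρ, ρ) for all i. -/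
open scoped RealInnerProductSpace

/-- Four mutually orthogonal roots of α-height 1 are all long. -/
theorem stmt3 {ι V : Type*} [Fintype ι] [NormedAddCommGroup V] [InnerProductSpace ℝ V]
    (S : BasedRootSystem ι V) (β : Fin 4 → V) (hβ : ∀ i, β i ∈ S.Ψ)
    (hht : ∀ i, S.pair (β i) S.ρ = 1)
    (horth : ∀ i j, i ≠ j → ⟪β i, β j⟫ = 0) :
    ∀ i, ⟪β i, β i⟫ = ⟪S.ρ, S.ρ⟫ := by
  have hρ0 : S.ρ ≠ 0 := S.ne_zero _ S.rho_mem
  have hρρ : (0:ℝ) < ⟪S.ρ, S.ρ⟫ :=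
    lt_of_le_of_ne real_inner_self_nonneg (Ne.symm (inner_self_ne_zero.mpr hρ0))
  have hββ : ∀ i, (0:ℝ) < ⟪β i, β i⟫ := fun i =>
    lt_of_le_of_ne real_inner_self_nonneg (Ne.symm (inner_self_ne_zero.mpr (S.ne_zero _ (hβ i))))
  -- (βᵢ, ρ) = (ρ,ρ)/2
  have hbr : ∀ i, ⟪β i, S.ρ⟫ = ⟪S.ρ, S.ρ⟫ / 2 := by
    intro i
    have h := hht i
    unfold BasedRootSystem.pair at h
    field_simp at h
    linarith
  -- each βᵢ is at most as long as ρ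
  have hle : ∀ i, ⟪β i, β i⟫ ≤ ⟪S.ρ, S.ρ⟫ := by
    intro i
    obtain ⟨n, hn⟩ := S.cartanInt S.ρ S.rho_mem (β i) (hβ i)
    rw [real_inner_comm, hbr i] at hn
    have hne : ⟪β i, β i⟫ ≠ 0 := ne_of_gt (hββ i)
    have hn' : (n:ℝ) * ⟪β i, β i⟫ = ⟪S.ρ, S.ρ⟫ := by
      field_simp at hn; linarith
    have hnpos : (0:ℝ) < (n:ℝ) := by
      by_contra h
      push_neg at h
      nlinarith [hββ i]
    have hn1 : (1:ℝ) ≤ (n:ℝ) := by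
      exact_mod_cast (by exact_mod_cast hnpos : (0:ℤ) < n)
    nlinarith [hββ i]
  -- positivity of ‖2ρ - Σ βᵢ‖²
  set σ := β 0 + β 1 + β 2 + β 3 with hσ
  have hσρ : ⟪σ, S.ρ⟫ = 2 * ⟪S.ρ, S.ρ⟫ := by
    simp only [hσ, inner_add_left, hbr]
    ring
  have hσσ : ⟪σ, σ⟫ = ⟪β 0, β 0⟫ + ⟪β 1, β 1⟫ + ⟪β 2, β 2⟫ + ⟪β 3, β 3⟫ := by
    simp only [hσ, inner_add_left, inner_add_right]
    have o : ∀ i j : Fin 4, i ≠ j → ⟪β i, β j⟫ = 0 := horth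
    rw [o 0 1 (by decide), o 0 2 (by decide), o 0 3 (by decide),
      o 1 0 (by decide), o 1 2 (by decide), o 1 3 (by decide),
      o 2 0 (by decide), o 2 1 (by decide), o 2 3 (by decide),
      o 3 0 (by decide), o 3 1 (by decide), o 3 2 (by decide)]
    ring
  have hpos : (0:ℝ) ≤ ⟪(2:ℝ) • S.ρ - σ, (2:ℝ) • S.ρ - σ⟫ := real_inner_self_nonneg
  have hexp : ⟪(2:ℝ) • S.ρ - σ, (2:ℝ) • S.ρ - σ⟫ =
      4 * ⟪S.ρ, S.ρ⟫ - 4 * ⟪σ, S.ρ⟫ + ⟪σ, σ⟫ := by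
    simp only [inner_sub_left, inner_sub_right, real_inner_smul_left,
      real_inner_smul_right, real_inner_comm σ S.ρ]
    ring
  have key : 4 * ⟪S.ρ, S.ρ⟫ ≤
      ⟪β 0, β 0⟫ + ⟪β 1, β 1⟫ + ⟪β 2, β 2⟫ + ⟪β 3, β 3⟫ := by
    rw [hexp, hσρ, hσσ] at hpos
    linarith
  have h0 := hle 0; have h1 := hle 1; have h2 := hle 2; have h3 := hle 3
  have e0 : ⟪β 0, β 0⟫ = ⟪S.ρ, S.ρ⟫ := by linarith
  have e1 : ⟪β 1, β 1⟫ = ⟪S.ρ, S.ρ⟫ := by linarith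
  have e2 : ⟪β 2, β 2⟫ = ⟪S.ρ, S.ρ⟫ := by linarith
  have e3 : ⟪β 3, β 3⟫ = ⟪S.ρ, S.ρ⟫ := by linarith
  intro i
  fin_cases i
  exacts [e0, e1, e2, e3]
end

section
/- Let Ψ be an irreducible root system with highest root ρ, and let β₁, β₂, β₃, β₄ be long roots each with ⟨βᵢ, ρ⟩ = 1 and with β₁+β₂+β₃+β₄ = 2ρ. Then ⟨β₁,β₂⟩ = ⟨β₃,β₄⟩. -/
open scoped RealInnerProductSpace

/-!
Write `c = (ρ, ρ)`. The conditions `⟨βᵢ, ρ⟩ = 1` say `(βᵢ, ρ) = c / 2`, so `x = β₁ + β₂` satisfies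
`(x, ρ) = (ρ, ρ)`; then `β₃ + β₄ = 2ρ - x` has the same length as `x`. Expanding
`|β₁ + β₂|² = |β₃ + β₄|²` and using that all four roots have length `|ρ|` leaves
`(β₁, β₂) = (β₃, β₄)`.
-/

theorem real_inner_self_two_smul_sub_of_inner_eq {V : Type*} [NormedAddCommGroup V]
    [InnerProductSpace ℝ V] {x r : V} (h : ⟪x, r⟫ = ⟪r, r⟫) :
    ⟪(2 : ℝ) • r - x, (2 : ℝ) • r - x⟫ = ⟪x, x⟫ := by
  simp only [inner_sub_left, inner_sub_right, inner_smul_left, inner_smul_right,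
    real_inner_comm x r, h, RCLike.conj_to_real]
  ring

namespace BasedRootSystem

theorem inner_rho_eq_half_of_pair_rho_eq_one {ι V : Type*} [Fintype ι]
    [NormedAddCommGroup V] [InnerProductSpace ℝ V] (S : BasedRootSystem ι V) {β : V}
    (h : S.pair β S.ρ = 1) : ⟪β, S.ρ⟫ = ⟪S.ρ, S.ρ⟫ / 2 := by
  unfold pair at h
  have hρ : ⟪S.ρ, S.ρ⟫ ≠ 0 := by
    rintro hρ
    rw [hρ, div_zero] at h
    exact zero_ne_one h
  field_simp at h
  linarith

end BasedRootSystem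

theorem stmt5_general {ι V : Type*} [Fintype ι] [NormedAddCommGroup V] [InnerProductSpace ℝ V]
    (S : BasedRootSystem ι V) (β : Fin 4 → V)
    (hlong : ∀ i, S.IsLong (β i))
    (hht : ∀ i, S.pair (β i) S.ρ = 1)
    (hsum : β 0 + β 1 + β 2 + β 3 = (2 : ℝ) • S.ρ) :
    S.pair (β 0) (β 1) = S.pair (β 2) (β 3) := by
  have hρ := fun i => S.inner_rho_eq_half_of_pair_rho_eq_one (hht i)
  have hx : ⟪β 0 + β 1, S.ρ⟫ = ⟪S.ρ, S.ρ⟫ := by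
    rw [inner_add_left, hρ 0, hρ 1]
    ring
  have hy : β 2 + β 3 = (2 : ℝ) • S.ρ - (β 0 + β 1) := by
    rw [← hsum]
    abel
  have hlen := real_inner_self_two_smul_sub_of_inner_eq hx
  rw [← hy, real_inner_add_add_self, real_inner_add_add_self] at hlen
  have hlong' : ∀ i, ⟪β i, β i⟫ = ⟪S.ρ, S.ρ⟫ := hlong
  have key : ⟪β 0, β 1⟫ = ⟪β 2, β 3⟫ := by
    rw [hlong' 0, hlong' 1, hlong' 2, hlong' 3] at hlen
    linarith
  unfold BasedRootSystem.pair
  rw [hlong' 1, hlong' 3, key]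

/-- For long roots β₁,…,β₄ of α-height 1 summing to 2ρ, ⟨β₁,β₂⟩ = ⟨β₃,β₄⟩. -/
theorem stmt5 {ι V : Type*} [Fintype ι] [NormedAddCommGroup V] [InnerProductSpace ℝ V]
    (S : BasedRootSystem ι V) (β : Fin 4 → V) (hβ : ∀ i, β i ∈ S.Ψ)
    (hlong : ∀ i, S.IsLong (β i))
    (hht : ∀ i, S.pair (β i) S.ρ = 1)
    (hsum : β 0 + β 1 + β 2 + β 3 = (2 : ℝ) • S.ρ) :
    S.pair (β 0) (β 1) = S.pair (β 2) (β 3) :=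
  stmt5_general S β hlong hht hsum
end

section
/- Let Ψ be an irreducible root system with highest root ρ, and let β₁, β₂, β₃, β₄ be long roots each with ⟨βᵢ, ρ⟩ = 1 and with β₁+β₂+β₃+β₄ = 2ρ. Then exactly one of the following holds: (a) up to reordering, the roots are β, β, ρ−β, ρ−β for some root β; (b) up to reordering, the roots are β, ρ−β, γ, ρ−γ for distinct roots β, γ with β and γ orthogonal; (c) the four roots are mutually orthogonal. -/
/-!
Write `R = (ρ, ρ)`. A long root `β` with `⟨β, ρ⟩ = 1` has `2 (β, ρ) = R`, and for two such roots
`β ≠ γ` the integer `⟨β, γ⟩` lies in `{-1, 0, 1}`, with `⟨β, γ⟩ = -1` exactly when `β + γ = ρ`.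
Pairing `β₁ + β₂ + β₃ + β₄ = 2ρ` with `βᵢ` shows that the other three roots pair with `βᵢ` to a
total of `0`. A repeated root forces the other two to be `ρ - βᵢ` (case (a)); otherwise a pair
summing to `ρ` splits the quadruple into two such pairs, one root of the second pair being
orthogonal to `βᵢ` (case (b)); and if no pair sums to `ρ`, all pairings are non-negative with zero
row sums, hence zero (case (c)). The cases are exclusive because in case (a) no two of the roots
are orthogonal, while in case (b) some are and some are not.
-/

open scoped RealInnerProductSpace

section
variable {ι V : Type*} [Fintype ι] [NormedAddCommGroup V] [InnerProductSpace ℝ V]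

/-- Case (a): up to reordering the roots are β, β, ρ−β, ρ−β. -/
def CaseA (S : BasedRootSystem ι V) (β : Fin 4 → V) : Prop :=
  ∃ σ : Equiv.Perm (Fin 4), ∃ γ ∈ S.Ψ,
    β (σ 0) = γ ∧ β (σ 1) = γ ∧ β (σ 2) = S.ρ - γ ∧ β (σ 3) = S.ρ - γ

/-- Case (b): up to reordering the roots are β, ρ−β, γ, ρ−γ with β ≠ γ orthogonal. -/
def CaseB (S : BasedRootSystem ι V) (β : Fin 4 → V) : Prop :=
  ∃ σ : Equiv.Perm (Fin 4), ∃ γ ∈ S.Ψ, ∃ δ ∈ S.Ψ, γ ≠ δ ∧ ⟪γ, δ⟫ = 0 ∧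
    β (σ 0) = γ ∧ β (σ 1) = S.ρ - γ ∧ β (σ 2) = δ ∧ β (σ 3) = S.ρ - δ

/-- Case (c): the four roots are mutually orthogonal. -/
def CaseC (S : BasedRootSystem ι V) (β : Fin 4 → V) : Prop :=
  ∀ i j, i ≠ j → ⟪β i, β j⟫ = 0


theorem eq_of_real_inner_eq_inner_self {x y : V} (hx : ⟪x, y⟫ = ⟪x, x⟫) (hy : ⟪x, y⟫ = ⟪y, y⟫) :
    x = y := by
  rw [← sub_eq_zero, ← inner_self_eq_zero (𝕜 := ℝ), real_inner_sub_sub_self]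
  linarith

namespace BasedRootSystem

variable {S : BasedRootSystem ι V} {b c : V}

theorem inner_rho_self_pos (S : BasedRootSystem ι V) : 0 < ⟪S.ρ, S.ρ⟫ :=
  real_inner_self_pos.2 (S.ne_zero _ S.rho_mem)

theorem two_inner_eq_pair_mul (hc : S.IsLong c) : 2 * ⟪b, c⟫ = S.pair b c * ⟪S.ρ, S.ρ⟫ := by
  rw [pair, hc, div_mul_cancel₀ _ S.inner_rho_self_pos.ne']

theorem pair_eq_neg_one_or_zero_or_one (hb : b ∈ S.Ψ) (hc : c ∈ S.Ψ) (hbl : S.IsLong b)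
    (hcl : S.IsLong c) (hne : b ≠ c) (hne' : b ≠ -c) :
    S.pair b c = -1 ∨ S.pair b c = 0 ∨ S.pair b c = 1 := by
  obtain ⟨n, hn⟩ := S.cartanInt b hb c hc
  change S.pair b c = n at hn
  have hR := S.inner_rho_self_pos
  have hbc : 2 * ⟪b, c⟫ = n * ⟪S.ρ, S.ρ⟫ := hn ▸ two_inner_eq_pair_mul hcl
  have hCS : n ^ 2 ≤ 4 := by
    have hcs := real_inner_mul_inner_self_le b c
    rw [hbl, hcl] at hcs
    have hsq : (n : ℝ) ^ 2 * ⟪S.ρ, S.ρ⟫ ^ 2 ≤ 4 * ⟪S.ρ, S.ρ⟫ ^ 2 := by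
      rw [← mul_pow, ← hbc]; nlinarith
    exact_mod_cast le_of_mul_le_mul_right hsq (by positivity)
  obtain ⟨hlo, hhi⟩ : -2 ≤ n ∧ n ≤ 2 := ⟨by nlinarith, by nlinarith⟩
  rw [hn]
  interval_cases n
  · push_cast at hbc
    refine absurd (eq_of_real_inner_eq_inner_self ?_ ?_) hne'
    · rw [inner_neg_right, hbl]; linarith
    · rw [inner_neg_right, inner_neg_neg, hcl]; linarith
  · norm_num
  · norm_num
  · norm_num
  · push_cast at hbc
    refine absurd (eq_of_real_inner_eq_inner_self ?_ ?_) hne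
    · rw [hbl]; linarith
    · rw [hcl]; linarith

structure IsLongHeightOne (S : BasedRootSystem ι V) (b : V) : Prop where
  mem : b ∈ S.Ψ
  isLong : S.IsLong b
  pair_rho : S.pair b S.ρ = 1

namespace IsLongHeightOne

theorem inner_self (hb : S.IsLongHeightOne b) : ⟪b, b⟫ = ⟪S.ρ, S.ρ⟫ := hb.isLong

theorem two_inner_rho (hb : S.IsLongHeightOne b) : 2 * ⟪b, S.ρ⟫ = ⟪S.ρ, S.ρ⟫ := by
  rw [two_inner_eq_pair_mul rfl, hb.pair_rho, one_mul]

theorem two_inner_rho_sub (hb : S.IsLongHeightOne b) : 2 * ⟪b, S.ρ - b⟫ = -⟪S.ρ, S.ρ⟫ := by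
  rw [inner_sub_right, hb.inner_self, mul_sub, hb.two_inner_rho]
  ring

theorem two_inner_trichotomy (hb : S.IsLongHeightOne b) (hc : S.IsLongHeightOne c) (hne : b ≠ c) :
    2 * ⟪b, c⟫ = -⟪S.ρ, S.ρ⟫ ∨ ⟪b, c⟫ = 0 ∨ 2 * ⟪b, c⟫ = ⟪S.ρ, S.ρ⟫ := by
  have hne' : b ≠ -c := by
    rintro rfl
    have := hb.two_inner_rho
    rw [inner_neg_left] at this
    linarith [hc.two_inner_rho, S.inner_rho_self_pos]
  have hbc := two_inner_eq_pair_mul (b := b) hc.isLong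
  rcases pair_eq_neg_one_or_zero_or_one hb.mem hc.mem hb.isLong hc.isLong hne hne'
    with h | h | h <;> rw [h] at hbc
  · exact Or.inl (by linarith)
  · exact Or.inr (Or.inl (by linarith))
  · exact Or.inr (Or.inr (by linarith))

theorem neg_le_two_inner (hb : S.IsLongHeightOne b) (hc : S.IsLongHeightOne c) :
    -⟪S.ρ, S.ρ⟫ ≤ 2 * ⟪b, c⟫ := by
  have hR := S.inner_rho_self_pos
  by_cases hbc : b = c
  · rw [hbc, hc.inner_self]; linarith
  · rcases hb.two_inner_trichotomy hc hbc with h | h | h <;> linarith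

theorem add_eq_rho (hb : S.IsLongHeightOne b) (hc : S.IsLongHeightOne c)
    (h : 2 * ⟪b, c⟫ = -⟪S.ρ, S.ρ⟫) : b + c = S.ρ := by
  rw [← sub_eq_zero, ← inner_self_eq_zero (𝕜 := ℝ), real_inner_sub_sub_self,
    real_inner_add_add_self, inner_add_left, hb.inner_self, hc.inner_self]
  linarith [hb.two_inner_rho, hc.two_inner_rho]

end IsLongHeightOne

variable {κ : Type*} [Fintype κ] {β : κ → V}

theorem sum_inner_eq (hβ : ∀ i, S.IsLongHeightOne (β i)) (hsum : ∑ i, β i = (2 : ℝ) • S.ρ)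
    (i : κ) : ∑ j, ⟪β i, β j⟫ = ⟪S.ρ, S.ρ⟫ := by
  rw [← inner_sum, hsum, real_inner_smul_right, (hβ i).two_inner_rho]

theorem pairwise_inner_eq_zero (hβ : ∀ i, S.IsLongHeightOne (β i))
    (hsum : ∑ i, β i = (2 : ℝ) • S.ρ) (hnonneg : Pairwise fun i j => 0 ≤ ⟪β i, β j⟫) :
    Pairwise fun i j => ⟪β i, β j⟫ = 0 := by
  classical
  intro i j hij
  have hrow := sum_inner_eq hβ hsum i
  rw [← Finset.add_sum_erase _ _ (Finset.mem_univ i), (hβ i).inner_self, add_eq_left] at hrow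
  exact (Finset.sum_eq_zero_iff_of_nonneg fun k hk => hnonneg (Finset.ne_of_mem_erase hk).symm).1
    hrow j (Finset.mem_erase.2 ⟨hij.symm, Finset.mem_univ j⟩)

end BasedRootSystem

open BasedRootSystem

theorem exists_perm_fin_four_apply_zero_apply_one {i j : Fin 4} (hij : i ≠ j) :
    ∃ τ : Equiv.Perm (Fin 4), τ 0 = i ∧ τ 1 = j := by
  revert i j
  decide

variable {S : BasedRootSystem ι V} {β : Fin 4 → V}

theorem CaseA.of_comp (τ : Equiv.Perm (Fin 4)) (h : CaseA S (β ∘ τ)) : CaseA S β :=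
  let ⟨σ, γ, hγ, h⟩ := h
  ⟨σ.trans τ, γ, hγ, h⟩

theorem CaseB.of_comp (τ : Equiv.Perm (Fin 4)) (h : CaseB S (β ∘ τ)) : CaseB S β :=
  let ⟨σ, γ, hγ, h⟩ := h
  ⟨σ.trans τ, γ, hγ, h⟩

theorem caseA_of_apply_zero_eq_apply_one (hβ : ∀ i, S.IsLongHeightOne (β i))
    (hsum : ∑ i, β i = (2 : ℝ) • S.ρ) (h01 : β 0 = β 1) : CaseA S β := by
  have hrow := sum_inner_eq hβ hsum 0
  rw [Fin.sum_univ_four, ← h01, (hβ 0).inner_self] at hrow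
  have h2 := (hβ 0).neg_le_two_inner (hβ 2)
  have h3 := (hβ 0).neg_le_two_inner (hβ 3)
  have hb2 := (hβ 0).add_eq_rho (hβ 2) (by linarith)
  have hb3 := (hβ 0).add_eq_rho (hβ 3) (by linarith)
  exact ⟨1, β 0, (hβ 0).mem, rfl, h01.symm, eq_sub_of_add_eq' hb2, eq_sub_of_add_eq' hb3⟩

theorem caseB_of_two_inner_eq_neg (hβ : ∀ i, S.IsLongHeightOne (β i))
    (hsum : ∑ i, β i = (2 : ℝ) • S.ρ) (hinj : Function.Injective β)
    (h01 : 2 * ⟪β 0, β 1⟫ = -⟪S.ρ, S.ρ⟫) : CaseB S β := by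
  have hb01 := (hβ 0).add_eq_rho (hβ 1) h01
  have hb23 : β 2 + β 3 = S.ρ := by
    rw [Fin.sum_univ_four] at hsum
    calc β 2 + β 3 = (β 0 + β 1 + β 2 + β 3) - (β 0 + β 1) := by abel
      _ = S.ρ := by rw [hsum, hb01, two_smul, add_sub_cancel_right]
  have hrow : ⟪β 0, β 2⟫ + ⟪β 0, β 3⟫ = ⟪β 0, S.ρ⟫ := by rw [← inner_add_right, hb23]
  have hρ := (hβ 0).two_inner_rho
  rcases (hβ 0).two_inner_trichotomy (hβ 2) (hinj.ne (by decide)) with h2 | h2 | h2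
  · rcases (hβ 0).two_inner_trichotomy (hβ 3) (hinj.ne (by decide)) with h3 | h3 | h3 <;>
      linarith [S.inner_rho_self_pos]
  · exact ⟨1, β 0, (hβ 0).mem, β 2, (hβ 2).mem, hinj.ne (by decide), h2, rfl,
      eq_sub_of_add_eq' hb01, rfl, eq_sub_of_add_eq' hb23⟩
  · exact ⟨Equiv.swap 2 3, β 0, (hβ 0).mem, β 3, (hβ 3).mem, hinj.ne (by decide),
      by linarith, rfl, eq_sub_of_add_eq' hb01, rfl, eq_sub_of_add_eq hb23⟩

theorem caseA_or_caseB_or_caseC (hβ : ∀ i, S.IsLongHeightOne (β i))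
    (hsum : ∑ i, β i = (2 : ℝ) • S.ρ) : CaseA S β ∨ CaseB S β ∨ CaseC S β := by
  have hsum_comp (τ : Equiv.Perm (Fin 4)) : ∑ i, (β ∘ τ) i = (2 : ℝ) • S.ρ :=
    (Equiv.sum_comp τ β).trans hsum
  by_cases hinj : Function.Injective β
  swap
  · obtain ⟨i, j, he, hij⟩ := Function.not_injective_iff.1 hinj
    obtain ⟨τ, rfl, rfl⟩ := exists_perm_fin_four_apply_zero_apply_one hij
    exact Or.inl ((caseA_of_apply_zero_eq_apply_one (fun k => hβ (τ k)) (hsum_comp τ) he).of_comp τ)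
  by_cases hneg : ∃ i j, i ≠ j ∧ 2 * ⟪β i, β j⟫ = -⟪S.ρ, S.ρ⟫
  · obtain ⟨i, j, hij, h⟩ := hneg
    obtain ⟨τ, rfl, rfl⟩ := exists_perm_fin_four_apply_zero_apply_one hij
    exact Or.inr (Or.inl ((caseB_of_two_inner_eq_neg (fun k => hβ (τ k)) (hsum_comp τ)
      (hinj.comp τ.injective) h).of_comp τ))
  push Not at hneg
  refine Or.inr (Or.inr (pairwise_inner_eq_zero hβ hsum fun i j hij => ?_))
  rcases (hβ i).two_inner_trichotomy (hβ j) (hinj.ne hij) with h | h | h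
  · exact absurd h (hneg i j hij)
  · exact h.ge
  · linarith [S.inner_rho_self_pos]

theorem CaseA.eq_or_eq_rho_sub (hA : CaseA S β) (i j : Fin 4) :
    β j = β i ∨ β j = S.ρ - β i := by
  obtain ⟨σ, γ, -, h0, h1, h2, h3⟩ := hA
  have hmem (k : Fin 4) : β k = γ ∨ β k = S.ρ - γ := by
    obtain ⟨m, rfl⟩ := σ.surjective k
    fin_cases m <;> simp [h0, h1, h2, h3]
  rcases hmem i with hi | hi <;> rcases hmem j with hj | hj <;> simp [hi, hj]

theorem CaseA.inner_ne_zero (hβ : ∀ i, S.IsLongHeightOne (β i)) (hA : CaseA S β) (i j : Fin 4) :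
    ⟪β i, β j⟫ ≠ 0 := by
  rcases hA.eq_or_eq_rho_sub i j with h | h <;> rw [h]
  · exact inner_self_ne_zero.2 (S.ne_zero _ (hβ i).mem)
  · have := (hβ i).two_inner_rho_sub
    linarith [S.inner_rho_self_pos]

theorem CaseA.not_caseB (hβ : ∀ i, S.IsLongHeightOne (β i)) (hA : CaseA S β) : ¬CaseB S β := by
  rintro ⟨σ, γ, -, δ, -, -, hγδ, h0, -, h2, -⟩
  exact hA.inner_ne_zero hβ (σ 0) (σ 2) (by rw [h0, h2, hγδ])

theorem CaseA.not_caseC (hβ : ∀ i, S.IsLongHeightOne (β i)) (hA : CaseA S β) : ¬CaseC S β :=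
  fun hC => hA.inner_ne_zero hβ 0 1 (hC 0 1 (by decide))

theorem CaseB.not_caseC (hβ : ∀ i, S.IsLongHeightOne (β i)) (hB : CaseB S β) : ¬CaseC S β := by
  obtain ⟨σ, γ, -, δ, -, -, -, h0, h1, -, -⟩ := hB
  intro hC
  have horth := hC (σ 0) (σ 1) (σ.injective.ne (by decide))
  have hneg := (hβ (σ 0)).two_inner_rho_sub
  rw [h0] at hneg
  rw [h0, h1] at horth
  linarith [S.inner_rho_self_pos]

/-- If four long roots of α-height 1 sum to 2ρ then exactly one of cases
(a), (b), (c) holds. -/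
theorem stmt6 (S : BasedRootSystem ι V) (β : Fin 4 → V) (hβ : ∀ i, β i ∈ S.Ψ)
    (hlong : ∀ i, S.IsLong (β i))
    (hht : ∀ i, S.pair (β i) S.ρ = 1)
    (hsum : β 0 + β 1 + β 2 + β 3 = (2 : ℝ) • S.ρ) :
    (CaseA S β ∧ ¬ CaseB S β ∧ ¬ CaseC S β) ∨
    (¬ CaseA S β ∧ CaseB S β ∧ ¬ CaseC S β) ∨
    (¬ CaseA S β ∧ ¬ CaseB S β ∧ CaseC S β) := by
  have hβ' (i : Fin 4) : S.IsLongHeightOne (β i) := ⟨hβ i, hlong i, hht i⟩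
  have hsum' : ∑ i, β i = (2 : ℝ) • S.ρ := by rwa [Fin.sum_univ_four]
  rcases caseA_or_caseB_or_caseC hβ' hsum' with hA | hB | hC
  · exact Or.inl ⟨hA, hA.not_caseB hβ', hA.not_caseC hβ'⟩
  · exact Or.inr (Or.inl ⟨fun hA => hA.not_caseB hβ' hB, hB, hB.not_caseC hβ'⟩)
  · exact Or.inr (Or.inr ⟨fun hA => hA.not_caseC hβ' hC, fun hB => hB.not_caseC hβ' hC, hC⟩)

end
end

section
/- Let Ψ be a simply-laced irreducible root system with highest root ρ and a simple root α satisfying ⟨α,ρ⟩ = 1. For any root β with ⟨β,ρ⟩ = 1, the value ⟨ρ−2α, β⟩ equals −3 if β = α, equals 3 if β = ρ−α, and equals ±1 otherwise. Moreover, the values +1 and −1 each occur for exactly half of the roots β ∉ {α, ρ−α} with ⟨β,ρ⟩=1. -/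
open scoped RealInnerProductSpace

/-- In a simply-laced irreducible root system, for the simple root α with
⟨α,ρ⟩ = 1, the value ⟨ρ−2α,β⟩ on roots β of α-height 1 is −3 iff β = α,
3 iff β = ρ−α, and ±1 otherwise; the values 1 and −1 occur equally often. -/
theorem stmt7 {ι V : Type*} [Fintype ι] [NormedAddCommGroup V] [InnerProductSpace ℝ V]
    (S : BasedRootSystem ι V)
    (hsl : ∀ β ∈ S.Ψ, S.IsLong β)
    (α : V) (hα : ∃ i, S.base i = α) (hαρ : S.pair α S.ρ = 1) :
    (∀ β ∈ S.Ψ, S.pair β S.ρ = 1 →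
      ((β = α → S.pair (S.ρ - (2 : ℝ) • α) β = -3) ∧
       (β = S.ρ - α → S.pair (S.ρ - (2 : ℝ) • α) β = 3) ∧
       (β ≠ α → β ≠ S.ρ - α →
         S.pair (S.ρ - (2 : ℝ) • α) β = 1 ∨ S.pair (S.ρ - (2 : ℝ) • α) β = -1))) ∧
    {β | β ∈ S.Ψ ∧ S.pair β S.ρ = 1 ∧ β ≠ α ∧ β ≠ S.ρ - α ∧
        S.pair (S.ρ - (2 : ℝ) • α) β = 1}.ncard =
    {β | β ∈ S.Ψ ∧ S.pair β S.ρ = 1 ∧ β ≠ α ∧ β ≠ S.ρ - α ∧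
        S.pair (S.ρ - (2 : ℝ) • α) β = -1}.ncard := by

  obtain ⟨i, hiα⟩ := hα
  have hαΨ : α ∈ S.Ψ := hiα ▸ S.base_mem i
  have hρΨ := S.rho_mem
  set L : ℝ := ⟪S.ρ, S.ρ⟫ with hLdef
  have hLpos : 0 < L := by
    rcases lt_or_eq_of_le (real_inner_self_nonneg (x := S.ρ)) with h | h
    · exact h
    · exact absurd ((inner_self_eq_zero (𝕜 := ℝ)).mp h.symm) (S.ne_zero _ hρΨ)
  have hlen : ∀ β ∈ S.Ψ, ⟪β, β⟫ = L := fun β hβ => hsl β hβ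
  have hpair : ∀ β γ, γ ∈ S.Ψ → S.pair β γ = 2 * ⟪β, γ⟫ / L := by
    intro β γ hγ
    rw [BasedRootSystem.pair, hlen γ hγ]
  -- Cauchy–Schwarz style bound with equality case, for roots
  have hCS : ∀ β ∈ S.Ψ, ∀ γ ∈ S.Ψ, ⟪β, γ⟫ ≤ L ∧ (⟪β, γ⟫ = L → β = γ) := by
    intro β hβ γ hγ
    have h0 : (0:ℝ) ≤ ⟪β - γ, β - γ⟫ := real_inner_self_nonneg
    have hx : ⟪β - γ, β - γ⟫ = 2*L - 2*⟪β, γ⟫ := by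
      rw [real_inner_sub_sub_self, hlen β hβ, hlen γ hγ]; ring
    refine ⟨by linarith, fun h => ?_⟩
    have h1 : ⟪β - γ, β - γ⟫ = (0:ℝ) := by rw [hx, h]; ring
    have h2 : β - γ = 0 := by
      have := (inner_self_eq_zero (𝕜 := ℝ)).mp h1
      exact this
    exact sub_eq_zero.mp h2
  have hαρ' : 2 * ⟪α, S.ρ⟫ = L := by
    have h := hαρ
    rw [hpair α S.ρ hρΨ] at h
    field_simp at h
    linarith
  -- the value formula
  have hval : ∀ β ∈ S.Ψ, S.pair (S.ρ - (2:ℝ) • α) β = (2*⟪S.ρ, β⟫ - 4*⟪α, β⟫)/L := by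
    intro β hβ
    rw [hpair _ _ hβ, inner_sub_left, real_inner_smul_left]
    ring_nf
  -- if `pair β ρ = 1` then `ρ - β` is a root
  have hflipmem : ∀ β ∈ S.Ψ, S.pair β S.ρ = 1 → S.ρ - β ∈ S.Ψ := by
    intro β hβ h1
    have := S.reflect_mem β hβ S.ρ hρΨ
    rw [show (2 * ⟪β, S.ρ⟫ / ⟪S.ρ, S.ρ⟫ : ℝ) = S.pair β S.ρ from rfl, h1, one_smul] at this
    have := S.neg_mem _ this
    rwa [neg_sub] at this
  have hρα : S.ρ - α ∈ S.Ψ := by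
    apply hflipmem α hαΨ
    rw [hpair α S.ρ hρΨ]
    field_simp
    linarith
  -- main pointwise statement
  have main : ∀ β ∈ S.Ψ, S.pair β S.ρ = 1 →
      ((β = α → S.pair (S.ρ - (2 : ℝ) • α) β = -3) ∧
       (β = S.ρ - α → S.pair (S.ρ - (2 : ℝ) • α) β = 3) ∧
       (β ≠ α → β ≠ S.ρ - α →
         S.pair (S.ρ - (2 : ℝ) • α) β = 1 ∨ S.pair (S.ρ - (2 : ℝ) • α) β = -1)) := by
    intro β hβ hβρ
    have hβρ' : 2 * ⟪β, S.ρ⟫ = L := by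
      rw [hpair β S.ρ hρΨ] at hβρ
      field_simp at hβρ
      linarith
    have hρβ : 2 * ⟪S.ρ, β⟫ = L := by rw [real_inner_comm]; exact hβρ'
    refine ⟨?_, ?_, ?_⟩
    · rintro rfl
      rw [hval β hβ, hlen β hβ]
      field_simp
      linarith
    · rintro rfl
      have hαsub : ⟪α, S.ρ - α⟫ = ⟪α, S.ρ⟫ - ⟪α, α⟫ := inner_sub_right α S.ρ α
      rw [hval _ hβ, hαsub, hlen α hαΨ]
      rw [div_eq_iff hLpos.ne']
      linarith
    · intro hne1 hne2
      obtain ⟨n, hn⟩ := S.cartanInt α hαΨ β hβ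
      rw [hlen β hβ] at hn
      have hn' : 2 * ⟪α, β⟫ = n * L := by
        field_simp at hn
        linarith
      -- n ≤ 1
      have h1 : ⟪α, β⟫ < L := by
        rcases lt_or_eq_of_le (hCS α hαΨ β hβ).1 with h | h
        · exact h
        · exact absurd ((hCS α hαΨ β hβ).2 h).symm hne1
      have hnle : (n:ℝ) < 2 := by nlinarith
      -- β ≠ -α
      have hβnegα : β ≠ -α := by
        rintro rfl
        have : ⟪-α, S.ρ⟫ = -⟪α, S.ρ⟫ := inner_neg_left α S.ρ
        rw [this] at hβρ'
        linarith
      have h2 : ⟪α, -β⟫ < L := by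
        rcases lt_or_eq_of_le (hCS α hαΨ (-β) (S.neg_mem β hβ)).1 with h | h
        · exact h
        · have := (hCS α hαΨ (-β) (S.neg_mem β hβ)).2 h
          exact absurd (by rw [this]; simp) hβnegα
      rw [inner_neg_right] at h2
      have hnge : (-2:ℝ) < (n:ℝ) := by nlinarith
      -- n ≠ -1
      have hne3 : n ≠ -1 := by
        rintro rfl
        push_cast at hn'
        have hrefl := S.reflect_mem β hβ α hαΨ
        have hc : (2 * ⟪β, α⟫ / ⟪α, α⟫ : ℝ) = -1 := by
          rw [hlen α hαΨ, real_inner_comm]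
          rw [div_eq_iff hLpos.ne']
          linarith
        rw [hc] at hrefl
        have hmem : β + α ∈ S.Ψ := by
          have : β - (-1:ℝ) • α = β + α := by
            rw [neg_one_smul]; abel
          rwa [this] at hrefl
        have hip : ⟪β + α, S.ρ⟫ = L := by
          rw [inner_add_left]; linarith
        have := (hCS (β + α) hmem S.ρ hρΨ).2 hip
        apply hne2
        rw [← this]; abel
      have hn01 : n = 0 ∨ n = 1 := by
        have hl : -2 < n := by exact_mod_cast hnge
        have hr : n < 2 := by exact_mod_cast hnle
        omega
      rw [hval β hβ]
      rcases hn01 with rfl | rfl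
      · left
        push_cast at hn'
        rw [div_eq_iff hLpos.ne']
        linarith
      · right
        push_cast at hn'
        rw [div_eq_iff hLpos.ne']
        linarith
  refine ⟨main, ?_⟩
  -- counting part via the involution β ↦ ρ - β
  have hflipval : ∀ β ∈ S.Ψ, S.pair β S.ρ = 1 →
      S.pair (S.ρ - (2:ℝ) • α) (S.ρ - β) = - S.pair (S.ρ - (2:ℝ) • α) β := by
    intro β hβ h1
    have hβρ' : 2 * ⟪β, S.ρ⟫ = L := by
      rw [hpair β S.ρ hρΨ] at h1
      field_simp at h1
      linarith
    rw [hval _ (hflipmem β hβ h1), hval β hβ, inner_sub_right, inner_sub_right, ← neg_div]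
    have hc : ⟪S.ρ, β⟫ = ⟪β, S.ρ⟫ := real_inner_comm _ _
    have hρρ : ⟪S.ρ, S.ρ⟫ = L := hLdef.symm
    congr 1
    linarith
  have hflipρ : ∀ β ∈ S.Ψ, S.pair β S.ρ = 1 → S.pair (S.ρ - β) S.ρ = 1 := by
    intro β hβ h1
    have hβρ' : 2 * ⟪β, S.ρ⟫ = L := by
      rw [hpair β S.ρ hρΨ] at h1
      field_simp at h1
      linarith
    rw [hpair _ _ hρΨ, inner_sub_left, div_eq_one_iff_eq hLpos.ne']
    linarith
  have himg : (fun β => S.ρ - β) '' {β | β ∈ S.Ψ ∧ S.pair β S.ρ = 1 ∧ β ≠ α ∧ β ≠ S.ρ - α ∧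
        S.pair (S.ρ - (2 : ℝ) • α) β = 1} = {β | β ∈ S.Ψ ∧ S.pair β S.ρ = 1 ∧ β ≠ α ∧ β ≠ S.ρ - α ∧
        S.pair (S.ρ - (2 : ℝ) • α) β = -1} := by
    ext γ
    simp only [Set.mem_image, Set.mem_setOf_eq]
    constructor
    · rintro ⟨β, ⟨hβ, h1, hne1, hne2, hv⟩, rfl⟩
      refine ⟨hflipmem β hβ h1, hflipρ β hβ h1, ?_, ?_, ?_⟩
      · intro h; apply hne2; rw [← h]; abel
      · intro h
        apply hne1
        have : β = α := by
          have := sub_right_injective h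
          exact this
        exact this
      · rw [hflipval β hβ h1, hv]
    · rintro ⟨hγ, h1, hne1, hne2, hv⟩
      refine ⟨S.ρ - γ, ⟨hflipmem γ hγ h1, hflipρ γ hγ h1, ?_, ?_, ?_⟩, by abel⟩
      · intro h; exact hne2 (by rw [← h]; abel)
      · intro h; exact hne1 (sub_right_injective h)
      · rw [hflipval γ hγ h1, hv]; ring
  rw [← himg, Set.ncard_image_of_injective _ (fun a b h => by
    have : S.ρ - a = S.ρ - b := h
    have := sub_right_injective this
    exact this)]
end

section
/- In a Freudenthal triple system (V, q, ⟨−,−⟩), if x ∈ V is strictly regular and ⟨y,x⟩ = 0 for some y ∈ V, then xxy = 0. -/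
/-- A Freudenthal triple system: a vector space with a nonzero quartic form
(given via its symmetric 4-linear linearization), a nondegenerate skew-symmetric
bilinear form, and the triple product defined by ⟨w, xyz⟩ = q(w,x,y,z),
satisfying the Freudenthal identity. -/
structure FTS (F V : Type*) [Field F] [AddCommGroup V] [Module F V] where
  q : V → V → V → V → F
  bil : V → V → F
  tri : V → V → V → V
  q_add : ∀ x x' y z w, q (x + x') y z w = q x y z w + q x' y z w
  q_smul : ∀ (a : F) (x y z w : V), q (a • x) y z w = a * q x y z w
  q_swap12 : ∀ x y z w, q x y z w = q y x z w
  q_swap23 : ∀ x y z w, q x y z w = q x z y w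
  q_swap34 : ∀ x y z w, q x y z w = q x y w z
  q_ne : ∃ x, q x x x x ≠ 0
  bil_add_left : ∀ x x' y, bil (x + x') y = bil x y + bil x' y
  bil_smul_left : ∀ (a : F) (x y : V), bil (a • x) y = a * bil x y
  bil_skew : ∀ x y, bil x y = - bil y x
  bil_nondeg : ∀ x, (∀ y, bil x y = 0) → x = 0
  tri_def : ∀ w x y z, bil w (tri x y z) = q w x y z
  fts_id : ∀ x y, (2 : F) • tri (tri x x x) x y
      = bil y x • tri x x x + bil y (tri x x x) • x

namespace FTS

variable {F V : Type*} [Field F] [AddCommGroup V] [Module F V]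

/-- A nonzero element x is strictly regular if xxy ∈ Fx for all y. -/
def StrictlyRegular (S : FTS F V) (x : V) : Prop :=
  x ≠ 0 ∧ ∀ y, ∃ c : F, S.tri x x y = c • x

end FTS

/-- In a Freudenthal triple system, if x is strictly regular and ⟨y,x⟩ = 0,
then xxy = 0. -/
theorem stmt10 {F V : Type*} [Field F] [AddCommGroup V] [Module F V]
    [FiniteDimensional F V] (h2 : (2 : F) ≠ 0) (h3 : (3 : F) ≠ 0)
    (S : FTS F V) (x y : V) (hx : S.StrictlyRegular x)
    (h : S.bil y x = 0) :
    S.tri x x y = 0 := by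
  apply S.bil_nondeg
  intro w
  obtain ⟨c, hc⟩ := hx.2 w
  have key : S.q w x x y = 0 := by
    have : S.q w x x y = S.q y x x w := by
      rw [S.q_swap34 w x x y, S.q_swap23 w x y x, S.q_swap12 w y x x,
        S.q_swap23 y w x x, S.q_swap34 y x w x]
    rw [this, ← S.tri_def, hc, S.bil_skew, S.bil_smul_left, S.bil_skew x y, h]
    ring
  rw [S.bil_skew, S.tri_def, key, neg_zero]
end

section
/- Let V be a vector space over a field F of characteristic ≠ 2,3 with a symmetric 4-linear form q and nondegenerate skew-symmetric bilinear form ⟨−,−⟩, with triple product xyz defined by ⟨w,xyz⟩ = q(w,x,y,z). Suppose u, v ∈ V satisfy uuy = ⟨y,u⟩u and vvy = ⟨y,v⟩v for all y. Then for x = u + v one has xxx = 3⟨v,u⟩(u − v) and q(x) = q(x,x,x,x) = 6⟨v,u⟩². -/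
/-- A vector space equipped with a symmetric 4-linear form, a nondegenerate
skew-symmetric bilinear form, and the triple product defined by
⟨w, xyz⟩ = q(w,x,y,z). -/
structure QTS (F V : Type*) [Field F] [AddCommGroup V] [Module F V] where
  q : V → V → V → V → F
  bil : V → V → F
  tri : V → V → V → V
  q_add : ∀ x x' y z w, q (x + x') y z w = q x y z w + q x' y z w
  q_smul : ∀ (a : F) (x y z w : V), q (a • x) y z w = a * q x y z w
  q_swap12 : ∀ x y z w, q x y z w = q y x z w
  q_swap23 : ∀ x y z w, q x y z w = q x z y w
  q_swap34 : ∀ x y z w, q x y z w = q x y w z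
  bil_add_left : ∀ x x' y, bil (x + x') y = bil x y + bil x' y
  bil_smul_left : ∀ (a : F) (x y : V), bil (a • x) y = a * bil x y
  bil_skew : ∀ x y, bil x y = - bil y x
  bil_nondeg : ∀ x, (∀ y, bil x y = 0) → x = 0
  tri_def : ∀ w x y z, bil w (tri x y z) = q w x y z

namespace QTS

variable {F V : Type*} [Field F] [AddCommGroup V] [Module F V]

/-- A nonzero element x is strictly regular if xxy ∈ Fx for all y. -/
def StrictlyRegular (S : QTS F V) (x : V) : Prop :=
  x ≠ 0 ∧ ∀ y, ∃ c : F, S.tri x x y = c • x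

end QTS


section Aux
variable {F V : Type*} [Field F] [AddCommGroup V] [Module F V]

lemma QTS.bil_add_right (S : QTS F V) (x y y' : V) :
    S.bil x (y + y') = S.bil x y + S.bil x y' := by
  rw [S.bil_skew, S.bil_add_left, S.bil_skew y, S.bil_skew y']; ring

lemma QTS.bil_smul_right (S : QTS F V) (a : F) (x y : V) :
    S.bil x (a • y) = a * S.bil x y := by
  rw [S.bil_skew, S.bil_smul_left, S.bil_skew y]; ring

lemma QTS.bil_sub_right (S : QTS F V) (x y y' : V) :
    S.bil x (y - y') = S.bil x y - S.bil x y' := by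
  have : y - y' = y + (-1 : F) • y' := by module
  rw [this, S.bil_add_right, S.bil_smul_right]; ring

lemma QTS.bil_self (S : QTS F V) (h2 : (2 : F) ≠ 0) (x : V) : S.bil x x = 0 := by
  have h := S.bil_skew x x
  have h2' : 2 * S.bil x x = 0 := by linear_combination h
  exact (mul_eq_zero.mp h2').resolve_left h2

lemma QTS.q_add2 (S : QTS F V) (x y y' z w : V) :
    S.q x (y + y') z w = S.q x y z w + S.q x y' z w := by
  rw [S.q_swap12, S.q_add, S.q_swap12 y, S.q_swap12 y']

lemma QTS.q_add3 (S : QTS F V) (x y z z' w : V) :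
    S.q x y (z + z') w = S.q x y z w + S.q x y z' w := by
  rw [S.q_swap23, S.q_add2, S.q_swap23 x z, S.q_swap23 x z']

lemma QTS.q_add4 (S : QTS F V) (x y z w w' : V) :
    S.q x y z (w + w') = S.q x y z w + S.q x y z w' := by
  rw [S.q_swap34, S.q_add3, S.q_swap34 x y w, S.q_swap34 x y w']

end Aux

/-- If u, v satisfy uuy = ⟨y,u⟩u and vvy = ⟨y,v⟩v for all y, then for
x = u + v one has xxx = 3⟨v,u⟩(u − v) and q(x,x,x,x) = 6⟨v,u⟩². -/
theorem stmt12 {F V : Type*} [Field F] [AddCommGroup V] [Module F V]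
    [FiniteDimensional F V] (h2 : (2 : F) ≠ 0) (h3 : (3 : F) ≠ 0)
    (S : QTS F V) (u v : V)
    (hu : ∀ y, S.tri u u y = S.bil y u • u)
    (hv : ∀ y, S.tri v v y = S.bil y v • v) :
    S.tri (u + v) (u + v) (u + v) = (3 * S.bil v u) • (u - v) ∧
    S.q (u + v) (u + v) (u + v) (u + v) = 6 * (S.bil v u) ^ 2 := by
  set c := S.bil v u with hc
  have hbuu : S.bil u u = 0 := S.bil_self h2 u
  have hbvv : S.bil v v = 0 := S.bil_self h2 v
  have hbuv : S.bil u v = -c := by rw [S.bil_skew]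
  -- key values of q with first slot w
  have quu : ∀ w y, S.q w u u y = S.bil y u * S.bil w u := by
    intro w y
    rw [← S.tri_def, hu, S.bil_smul_right]
  have qvv : ∀ w y, S.q w v v y = S.bil y v * S.bil w v := by
    intro w y
    rw [← S.tri_def, hv, S.bil_smul_right]
  have qwuv : ∀ w, S.q w u v v = -c * S.bil w v := by
    intro w
    rw [S.q_swap23, S.q_swap34, qvv, hbuv]
  have qwvu : ∀ w, S.q w v u u = c * S.bil w u := by
    intro w
    rw [S.q_swap23, S.q_swap34, quu]
  have key : ∀ w, S.q w (u + v) (u + v) (u + v)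
      = S.bil w ((3 * c) • (u - v)) := by
    intro w
    rw [S.q_add2, S.q_add3, S.q_add3, S.q_add4, S.q_add4, S.q_add4, S.q_add4,
      S.bil_smul_right, S.bil_sub_right]
    have e1 : S.q w u u u = 0 := by rw [quu, hbuu]; ring
    have e2 : S.q w v v v = 0 := by rw [qvv, hbvv]; ring
    have e3 : S.q w u u v = c * S.bil w u := quu w v
    have e4 : S.q w v v u = -c * S.bil w v := by rw [qvv, hbuv]
    have e5 : S.q w u v u = c * S.bil w u := by rw [S.q_swap34, e3]
    have e6 : S.q w v u v = -c * S.bil w v := by rw [S.q_swap34, e4]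
    rw [e1, e2, e3, e4, e5, e6, qwuv, qwvu]
    ring
  have htri : S.tri (u + v) (u + v) (u + v) = (3 * c) • (u - v) := by
    have h0 : ∀ w, S.bil (S.tri (u + v) (u + v) (u + v) - (3 * c) • (u - v)) w = 0 := by
      intro w
      have := key w
      rw [← S.tri_def] at this
      rw [S.bil_skew, S.bil_sub_right, this]
      ring
    have := S.bil_nondeg _ h0
    exact sub_eq_zero.mp this
  refine ⟨htri, ?_⟩
  have : S.q (u + v) (u + v) (u + v) (u + v) = S.bil (u + v) ((3 * c) • (u - v)) :=
    key (u + v)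
  rw [this, S.bil_smul_right, S.bil_sub_right, S.bil_add_left, S.bil_add_left,
    hbuu, hbvv, hbuv, hc]
  ring
end

section
/- Let V, q, ⟨−,−⟩, and triple product be as in a Freudenthal-type setting, and suppose u, v ∈ V satisfy uuy = ⟨y,u⟩u and vvy = ⟨y,v⟩v for all y ∈ V. Then x = u + v satisfies the Freudenthal identity 2(xxx)xy = ⟨y,x⟩xxx + ⟨y,xxx⟩x for all y ∈ V. -/
namespace QTS

variable {F V : Type*} [Field F] [AddCommGroup V] [Module F V]

variable (S : QTS F V)

lemma bil_neg_left (x y : V) : S.bil (-x) y = - S.bil x y := by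
  have := S.bil_smul_left (-1) x y; simpa using this

lemma bil_sub_left (x y z : V) : S.bil (x - y) z = S.bil x z - S.bil y z := by
  rw [sub_eq_add_neg, S.bil_add_left, S.bil_neg_left, sub_eq_add_neg]

lemma bil_add_right_s13 (x y z : V) : S.bil x (y + z) = S.bil x y + S.bil x z := by
  rw [S.bil_skew, S.bil_add_left, neg_add, ← S.bil_skew, ← S.bil_skew]

lemma bil_smul_right_s13 (a : F) (x y : V) : S.bil x (a • y) = a * S.bil x y := by
  rw [S.bil_skew, S.bil_smul_left, S.bil_skew x y]; ring

lemma bil_self_s13 (h2 : (2 : F) ≠ 0) (x : V) : S.bil x x = 0 := by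
  have h := S.bil_skew x x
  have h' : (2 : F) * S.bil x x = 0 := by linear_combination h
  rcases mul_eq_zero.mp h' with h0 | h0
  · exact absurd h0 h2
  · exact h0

lemma ext' {a b : V} (h : ∀ w, S.bil w a = S.bil w b) : a = b := by
  have h0 : ∀ y, S.bil (a - b) y = 0 := by
    intro y
    rw [S.bil_sub_left]
    have h1 : S.bil a y = S.bil b y := by
      rw [S.bil_skew a y, h y, ← S.bil_skew b y]
    rw [h1, sub_self]
  exact sub_eq_zero.mp (S.bil_nondeg _ h0)

lemma q_rot (w x y z : V) : S.q w x y z = S.q z w x y := by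
  rw [S.q_swap34, S.q_swap23, S.q_swap12]

lemma q_add2_s13 (w x x' y z : V) : S.q w (x + x') y z = S.q w x y z + S.q w x' y z := by
  rw [S.q_swap12, S.q_add, S.q_swap12, S.q_swap12 x' w]

lemma q_add3_s13 (w x y y' z : V) : S.q w x (y + y') z = S.q w x y z + S.q w x y' z := by
  rw [S.q_swap23, S.q_add2_s13, S.q_swap23 w y x z, S.q_swap23 w y' x z]

lemma q_add4_s13 (w x y z z' : V) : S.q w x y (z + z') = S.q w x y z + S.q w x y z' := by
  rw [S.q_swap34, S.q_add3_s13, S.q_swap34 w x z y, S.q_swap34 w x z' y]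

end QTS

/-- If u, v satisfy uuy = ⟨y,u⟩u and vvy = ⟨y,v⟩v for all y, then x = u + v
satisfies the Freudenthal identity 2(xxx)xy = ⟨y,x⟩xxx + ⟨y,xxx⟩x. -/
theorem stmt13 {F V : Type*} [Field F] [AddCommGroup V] [Module F V]
    [FiniteDimensional F V] (h2 : (2 : F) ≠ 0) (h3 : (3 : F) ≠ 0)
    (S : QTS F V) (u v : V)
    (hu : ∀ y, S.tri u u y = S.bil y u • u)
    (hv : ∀ y, S.tri v v y = S.bil y v • v) :
    ∀ y, (2 : F) • S.tri (S.tri (u + v) (u + v) (u + v)) (u + v) y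
      = S.bil y (u + v) • S.tri (u + v) (u + v) (u + v)
        + S.bil y (S.tri (u + v) (u + v) (u + v)) • (u + v) := by
  -- q-values of the hypotheses
  have hqu : ∀ w y, S.q w u u y = S.bil y u * S.bil w u := by
    intro w y; rw [← S.tri_def, hu y, S.bil_smul_right_s13]
  have hqv : ∀ w y, S.q w v v y = S.bil y v * S.bil w v := by
    intro w y; rw [← S.tri_def, hv y, S.bil_smul_right_s13]
  have hbu : S.bil u u = 0 := S.bil_self_s13 h2 u
  have hbv : S.bil v v = 0 := S.bil_self_s13 h2 v
  have hbvu : S.bil v u = - S.bil u v := by rw [S.bil_skew]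
  -- the cube of x = u + v
  have key : S.tri (u + v) (u + v) (u + v)
      = (3 * S.bil v u) • u + (3 * S.bil u v) • v := by
    apply S.ext'
    intro w
    rw [S.tri_def, S.q_add2_s13, S.q_add3_s13, S.q_add3_s13, S.q_add4_s13, S.q_add4_s13, S.q_add4_s13,
      S.q_add4_s13]
    have e1 : S.q w u v u = S.q w u u v := by rw [S.q_swap34]
    have e2 : S.q w v u u = S.q w u u v := by rw [S.q_swap23, S.q_swap34]
    have e3 : S.q w u v v = S.q w v v u := by rw [S.q_swap23, S.q_swap34]
    have e4 : S.q w v u v = S.q w v v u := by rw [S.q_swap34]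
    rw [e1, e2, e3, e4, hqu, hqu, hqv, hqv, S.bil_add_right_s13, S.bil_smul_right_s13,
      S.bil_smul_right_s13, hbu, hbv]
    ring
  intro y
  rw [key]
  apply S.ext'
  intro w
  rw [S.bil_smul_right_s13, S.tri_def, S.q_swap12, S.q_add, S.q_smul, S.q_smul,
    S.q_swap12, S.q_swap12 v w]
  rw [S.q_add3_s13, S.q_add3_s13]
  have e5 : S.q w v u y = S.q w u v y := by rw [S.q_swap23]
  rw [e5, hqu, hqv]
  simp only [S.bil_add_right_s13, S.bil_smul_right_s13]
  rw [hbvu]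
  ring
end

section
/- Let c be the structure constants of a Chevalley basis of a simple Lie algebra with root system Ψ, satisfying: c_{β,γ} = −c_{γ,β}; c_{β,γ} = c_{γ,δ} = c_{δ,β} whenever β,γ,δ are long roots with β+γ+δ = 0; c_{β,γ} = ±1 when β,γ are long roots with β+γ a root; c_{β,γ} = 0 when β+γ is not a root; and c_{β,γ}c_{δ,ε} + c_{γ,δ}c_{β,ε} + c_{δ,β}c_{γ,ε} = 0 whenever β,γ,δ,ε are long roots summing to 0 with no two opposite. If β, γ are orthogonal long roots with ⟨β,ρ⟩ = ⟨γ,ρ⟩ = 1 (ρ the highest root), then β−ρ, γ−ρ and ρ−β−γ are roots, each of c_{β,γ−ρ}, c_{γ,β−ρ}, c_{β,−ρ}, c_{γ,−ρ} is ±1, and their product equals 1. -/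
open scoped RealInnerProductSpace

/-! Reflecting in `ρ` and then in `γ` produces the roots `β - ρ` and `ρ - β - γ`, all long. The
four-term relation for the long roots `β, γ, -ρ, ρ - β - γ` loses its `c β γ` term, and the cyclic
relations turn what is left into `c β (-ρ) * c γ (β - ρ) = c γ (-ρ) * c β (γ - ρ)`; the product in
question is therefore the square of a unit of `ℤ`. -/

namespace BasedRootSystem

variable {ι V : Type*} [Fintype ι] [NormedAddCommGroup V] [InnerProductSpace ℝ V]
variable (S : BasedRootSystem ι V) {x y z : V}

theorem pair_neg_left : S.pair (-x) y = -S.pair x y := by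
  simp only [pair, inner_neg_left]
  ring

theorem pair_sub_left : S.pair (x - y) z = S.pair x z - S.pair y z := by
  simp only [pair, inner_sub_left]
  ring

theorem pair_self (hx : x ≠ 0) : S.pair x x = 2 := by
  have : ⟪x, x⟫ ≠ 0 := inner_self_ne_zero.2 hx
  simp only [pair]
  field_simp

theorem pair_eq_zero_of_inner_eq_zero (h : ⟪x, y⟫ = 0) : S.pair x y = 0 := by
  simp [pair, h]

theorem isLong_rho : S.IsLong S.ρ := rfl

variable {S}

theorem isLong_neg : S.IsLong (-x) ↔ S.IsLong x := by
  simp only [IsLong, inner_neg_neg]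

theorem pair_comm_of_isLong (hx : S.IsLong x) (hy : S.IsLong y) : S.pair x y = S.pair y x := by
  simp only [pair, hx.trans hy.symm, real_inner_comm]

theorem two_mul_inner_eq_of_pair_eq {t : ℝ} (h : S.pair x y = t) (ht : t ≠ 0) :
    2 * ⟪x, y⟫ = t * ⟪y, y⟫ := by
  have hy : ⟪y, y⟫ ≠ 0 := fun hy => ht (by rw [← h, pair, hy, div_zero])
  rw [← h, pair, div_mul_cancel₀ _ hy]

theorem isLong_sub_of_pair_eq_one (hx : S.IsLong x) (h : S.pair x y = 1) : S.IsLong (x - y) := by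
  have := two_mul_inner_eq_of_pair_eq h one_ne_zero
  rw [IsLong, ← hx, inner_sub_sub_self, real_inner_comm x y]
  linarith

theorem isLong_add_of_pair_eq_neg_one (hx : S.IsLong x) (h : S.pair x y = -1) :
    S.IsLong (x + y) := by
  have := two_mul_inner_eq_of_pair_eq h (by norm_num)
  rw [IsLong, ← hx, inner_add_add_self, real_inner_comm x y]
  linarith

theorem sub_pair_smul_mem (hx : x ∈ S.Ψ) (hy : y ∈ S.Ψ) : x - S.pair x y • y ∈ S.Ψ :=
  S.reflect_mem x hx y hy

theorem sub_mem_of_pair_eq_one (hx : x ∈ S.Ψ) (hy : y ∈ S.Ψ) (h : S.pair x y = 1) :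
    x - y ∈ S.Ψ := by
  simpa [h] using sub_pair_smul_mem hx hy

theorem add_mem_of_pair_eq_neg_one (hx : x ∈ S.Ψ) (hy : y ∈ S.Ψ) (h : S.pair x y = -1) :
    x + y ∈ S.Ψ := by
  simpa [h] using sub_pair_smul_mem hx hy

theorem ne_neg_of_pair_ne (h : S.pair x z ≠ -S.pair y z) : x ≠ -y := by
  rintro rfl
  exact h (S.pair_neg_left)

theorem structConst_eq_neg_of_add_add_eq_zero {c : V → V → ℤ}
    (hanti : ∀ β ∈ S.Ψ, ∀ γ ∈ S.Ψ, c β γ = - c γ β)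
    (hcyc : ∀ β ∈ S.Ψ, ∀ γ ∈ S.Ψ, ∀ δ ∈ S.Ψ, S.IsLong β → S.IsLong γ → S.IsLong δ →
      β + γ + δ = 0 → c β γ = c γ δ ∧ c γ δ = c δ β)
    (hx : x ∈ S.Ψ) (hy : y ∈ S.Ψ) (hz : z ∈ S.Ψ)
    (hxl : S.IsLong x) (hyl : S.IsLong y) (hzl : S.IsLong z) (hsum : x + y + z = 0) :
    c x z = -c x y := by
  obtain ⟨hxy, hyz⟩ := hcyc x hx y hy z hz hxl hyl hzl hsum
  rw [hanti x hx z hz, hxy, hyz]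

structure IsOrthHeightOnePair (S : BasedRootSystem ι V) (β γ : V) : Prop where
  mem_left : β ∈ S.Ψ
  mem_right : γ ∈ S.Ψ
  isLong_left : S.IsLong β
  isLong_right : S.IsLong γ
  inner_eq_zero : ⟪β, γ⟫ = 0
  pair_left : S.pair β S.ρ = 1
  pair_right : S.pair γ S.ρ = 1

namespace IsOrthHeightOnePair

variable {β γ : V}

theorem symm (h : S.IsOrthHeightOnePair β γ) : S.IsOrthHeightOnePair γ β :=
  ⟨h.mem_right, h.mem_left, h.isLong_right, h.isLong_left,
    (real_inner_comm β γ).trans h.inner_eq_zero, h.pair_right, h.pair_left⟩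

theorem sub_rho_mem (h : S.IsOrthHeightOnePair β γ) : β - S.ρ ∈ S.Ψ :=
  sub_mem_of_pair_eq_one h.mem_left S.rho_mem h.pair_left

theorem isLong_sub_rho (h : S.IsOrthHeightOnePair β γ) : S.IsLong (β - S.ρ) :=
  isLong_sub_of_pair_eq_one h.isLong_left h.pair_left

theorem pair_sub_rho (h : S.IsOrthHeightOnePair β γ) : S.pair (β - S.ρ) γ = -1 := by
  rw [pair_sub_left, pair_eq_zero_of_inner_eq_zero _ h.inner_eq_zero,
    pair_comm_of_isLong S.isLong_rho h.isLong_right, h.pair_right, zero_sub]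

theorem rho_sub_sub_mem (h : S.IsOrthHeightOnePair β γ) : S.ρ - β - γ ∈ S.Ψ := by
  rw [show S.ρ - β - γ = -(β - S.ρ + γ) by abel]
  exact S.neg_mem _ (add_mem_of_pair_eq_neg_one h.sub_rho_mem h.mem_right h.pair_sub_rho)

theorem isLong_rho_sub_sub (h : S.IsOrthHeightOnePair β γ) : S.IsLong (S.ρ - β - γ) := by
  rw [show S.ρ - β - γ = -(β - S.ρ + γ) by abel, isLong_neg]
  exact isLong_add_of_pair_eq_neg_one h.isLong_sub_rho h.pair_sub_rho

theorem add_sub_rho_mem (h : S.IsOrthHeightOnePair β γ) : β + (γ - S.ρ) ∈ S.Ψ := by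
  convert S.neg_mem _ h.rho_sub_sub_mem using 1
  abel

theorem pair_rho_sub_sub_rho (h : S.IsOrthHeightOnePair β γ) : S.pair (S.ρ - β - γ) S.ρ = 0 := by
  rw [pair_sub_left, pair_sub_left, S.pair_self (S.ne_zero _ S.rho_mem), h.pair_left,
    h.pair_right]
  norm_num

theorem structConst_mul_eq {c : V → V → ℤ} (h : S.IsOrthHeightOnePair β γ)
    (hanti : ∀ β ∈ S.Ψ, ∀ γ ∈ S.Ψ, c β γ = - c γ β)
    (hcyc : ∀ β ∈ S.Ψ, ∀ γ ∈ S.Ψ, ∀ δ ∈ S.Ψ, S.IsLong β → S.IsLong γ → S.IsLong δ →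
      β + γ + δ = 0 → c β γ = c γ δ ∧ c γ δ = c δ β)
    (hzero : ∀ β γ : V, β + γ ∉ S.Ψ → c β γ = 0)
    (h4 : ∀ β ∈ S.Ψ, ∀ γ ∈ S.Ψ, ∀ δ ∈ S.Ψ, ∀ ε ∈ S.Ψ,
      S.IsLong β → S.IsLong γ → S.IsLong δ → S.IsLong ε →
      β + γ + δ + ε = 0 →
      β ≠ -γ → β ≠ -δ → β ≠ -ε → γ ≠ -δ → γ ≠ -ε → δ ≠ -ε →
      c β γ * c δ ε + c γ δ * c β ε + c δ β * c γ ε = 0)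
    (hβγ : β + γ ∉ S.Ψ) :
    c β (-S.ρ) * c γ (β - S.ρ) = c γ (-S.ρ) * c β (γ - S.ρ) := by
  have hρ : -S.ρ ∈ S.Ψ := S.neg_mem _ S.rho_mem
  have hρl : S.IsLong (-S.ρ) := isLong_neg.2 S.isLong_rho
  -- the four roots have `ρ`-pairings `1, 1, -2, 0`, so no two of them are opposite
  have hρρ : S.pair (-S.ρ) S.ρ = -2 := by
    rw [pair_neg_left, S.pair_self (S.ne_zero _ S.rho_mem)]
  have hδρ := h.pair_rho_sub_sub_rho
  have hβρ := h.pair_left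
  have hγρ := h.pair_right
  have hrel := h4 β h.mem_left γ h.mem_right (-S.ρ) hρ (S.ρ - β - γ) h.rho_sub_sub_mem
    h.isLong_left h.isLong_right hρl h.isLong_rho_sub_sub (by abel)
    (ne_neg_of_pair_ne (z := S.ρ) (by rw [hβρ, hγρ]; norm_num))
    (ne_neg_of_pair_ne (z := S.ρ) (by rw [hβρ, hρρ]; norm_num))
    (ne_neg_of_pair_ne (z := S.ρ) (by rw [hβρ, hδρ]; norm_num))
    (ne_neg_of_pair_ne (z := S.ρ) (by rw [hγρ, hρρ]; norm_num))
    (ne_neg_of_pair_ne (z := S.ρ) (by rw [hγρ, hδρ]; norm_num))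
    (ne_neg_of_pair_ne (z := S.ρ) (by rw [hρρ, hδρ]; norm_num))
  have hβδ : c β (S.ρ - β - γ) = -c β (γ - S.ρ) :=
    structConst_eq_neg_of_add_add_eq_zero hanti hcyc h.mem_left h.symm.sub_rho_mem
      h.rho_sub_sub_mem h.isLong_left h.symm.isLong_sub_rho h.isLong_rho_sub_sub (by abel)
  have hγδ : c γ (S.ρ - β - γ) = -c γ (β - S.ρ) :=
    structConst_eq_neg_of_add_add_eq_zero hanti hcyc h.mem_right h.sub_rho_mem
      h.rho_sub_sub_mem h.isLong_right h.isLong_sub_rho h.isLong_rho_sub_sub (by abel)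
  rw [hzero β γ hβγ, hβδ, hγδ, hanti _ hρ _ h.mem_left] at hrel
  linarith

end IsOrthHeightOnePair

end BasedRootSystem

open BasedRootSystem

/-- For orthogonal long roots β, γ of α-height 1: β−ρ, γ−ρ and ρ−β−γ are
roots, the four structure constants are ±1, and their product is 1. -/
theorem stmt15 {ι V : Type*} [Fintype ι] [NormedAddCommGroup V] [InnerProductSpace ℝ V]
    (S : BasedRootSystem ι V) (c : V → V → ℤ)
    (hanti : ∀ β ∈ S.Ψ, ∀ γ ∈ S.Ψ, c β γ = - c γ β)
    (hcyc : ∀ β ∈ S.Ψ, ∀ γ ∈ S.Ψ, ∀ δ ∈ S.Ψ, S.IsLong β → S.IsLong γ → S.IsLong δ →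
      β + γ + δ = 0 → c β γ = c γ δ ∧ c γ δ = c δ β)
    (hpm : ∀ β ∈ S.Ψ, ∀ γ ∈ S.Ψ, S.IsLong β → S.IsLong γ → β + γ ∈ S.Ψ →
      c β γ = 1 ∨ c β γ = -1)
    (hzero : ∀ β γ : V, β + γ ∉ S.Ψ → c β γ = 0)
    (h4 : ∀ β ∈ S.Ψ, ∀ γ ∈ S.Ψ, ∀ δ ∈ S.Ψ, ∀ ε ∈ S.Ψ,
      S.IsLong β → S.IsLong γ → S.IsLong δ → S.IsLong ε →
      β + γ + δ + ε = 0 →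
      β ≠ -γ → β ≠ -δ → β ≠ -ε → γ ≠ -δ → γ ≠ -ε → δ ≠ -ε →
      c β γ * c δ ε + c γ δ * c β ε + c δ β * c γ ε = 0)
    (β γ : V) (hβ : β ∈ S.Ψ) (hγ : γ ∈ S.Ψ)
    (hβl : S.IsLong β) (hγl : S.IsLong γ)
    (horth : ⟪β, γ⟫ = 0)
    (hβρ : S.pair β S.ρ = 1) (hγρ : S.pair γ S.ρ = 1)
    (hβγ : β + γ ∉ S.Ψ) :
    (β - S.ρ ∈ S.Ψ) ∧ (γ - S.ρ ∈ S.Ψ) ∧ (S.ρ - β - γ ∈ S.Ψ) ∧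
    (c β (γ - S.ρ) = 1 ∨ c β (γ - S.ρ) = -1) ∧
    (c γ (β - S.ρ) = 1 ∨ c γ (β - S.ρ) = -1) ∧
    (c β (-S.ρ) = 1 ∨ c β (-S.ρ) = -1) ∧
    (c γ (-S.ρ) = 1 ∨ c γ (-S.ρ) = -1) ∧
    c β (γ - S.ρ) * c γ (β - S.ρ) * c β (-S.ρ) * c γ (-S.ρ) = 1 := by
  have h : S.IsOrthHeightOnePair β γ := ⟨hβ, hγ, hβl, hγl, horth, hβρ, hγρ⟩
  have hρl : S.IsLong (-S.ρ) := isLong_neg.2 S.isLong_rho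
  have hcβ := hpm β hβ _ h.symm.sub_rho_mem hβl h.symm.isLong_sub_rho h.add_sub_rho_mem
  have hcγ := hpm γ hγ _ h.sub_rho_mem hγl h.isLong_sub_rho h.symm.add_sub_rho_mem
  have hcβρ := hpm β hβ _ (S.neg_mem _ S.rho_mem) hβl hρl (sub_eq_add_neg β S.ρ ▸ h.sub_rho_mem)
  have hcγρ := hpm γ hγ _ (S.neg_mem _ S.rho_mem) hγl hρl
    (sub_eq_add_neg γ S.ρ ▸ h.symm.sub_rho_mem)
  refine ⟨h.sub_rho_mem, h.symm.sub_rho_mem, h.rho_sub_sub_mem, hcβ, hcγ, hcβρ, hcγρ, ?_⟩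
  calc c β (γ - S.ρ) * c γ (β - S.ρ) * c β (-S.ρ) * c γ (-S.ρ)
      = (c β (-S.ρ) * c γ (β - S.ρ)) * (c γ (-S.ρ) * c β (γ - S.ρ)) := by ring
    _ = (c γ (-S.ρ) * c β (γ - S.ρ)) * (c γ (-S.ρ) * c β (γ - S.ρ)) := by
      rw [h.structConst_mul_eq hanti hcyc hzero h4 hβγ]
    _ = 1 := Int.isUnit_mul_self ((Int.isUnit_iff.2 hcγρ).mul (Int.isUnit_iff.2 hcβ))
end

section
/- Let c be Chevalley structure constants as in Carter's relations for a simply-laced root system Ψ with highest root ρ, and let β₁,β₂,β₃,β₄ be mutually orthogonal roots with ⟨βᵢ,ρ⟩ = 1 (hence β₁+β₂+β₃+β₄ = 2ρ and all βᵢ are long). Writing a_{ij} := c_{βᵢ, βⱼ−ρ}, each a_{ij} (i≠j) is ±1, and the relations a_{23}a_{14} = a_{13}a_{24} and a_{13}a_{23} = a_{14}a_{24} hold (and similarly for all permutations of distinct indices 1,2,3,4). Consequently, the product a_{σ(1)σ(4)} a_{σ(2)σ(1)} a_{σ(3)σ(4)} a_{σ(4)σ(1)} is independent of the permutation σ ∈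 S₄. -/
open scoped RealInnerProductSpace

private lemma tripleZ (apq aqp aps asp aqs asq apw aqw asw : ℤ)
    (hqw : aqw * aqw = 1) (hsw : asw * asw = 1)
    (hsq2 : asq * asq = 1) (hqs2 : aqs * aqs = 1)
    (E1 : aqs * apw = aps * aqw) (E2 : asq * apw = apq * asw)
    (E3 : asp * aqw = aqp * asw) :
    apq * asq * aqp = aps * aqs * asp := by
  have h1 : aps = aqs * apw * aqw := by linear_combination -aqw * E1 - aps * hqw
  have h2 : apq = asq * apw * asw := by linear_combination -asw * E2 - apq * hsw
  have h3 : aqp = asp * aqw * asw := by linear_combination -asw * E3 - aqp * hsw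
  rw [h1, h2, h3]
  linear_combination (apw * aqw * asp * asq * asq) * hsw + (apw * aqw * asp) * hsq2
    - (apw * aqw * asp) * hqs2

private def P4 (a : Fin 4 → Fin 4 → ℤ) (p q r s : Fin 4) : ℤ :=
  a p q * a r p * a s q * a q p

private lemma perm_inv (a : Fin 4 → Fin 4 → ℤ)
    (sq : ∀ i j : Fin 4, i ≠ j → a i j * a i j = 1)
    (rect : ∀ i j k l : Fin 4, i ≠ j → i ≠ k → i ≠ l → j ≠ k → j ≠ l → k ≠ l →
        a j k * a i l = a i k * a j l) :
    ∀ p q r s : Fin 4, p ≠ q → p ≠ r → p ≠ s → q ≠ r → q ≠ s → r ≠ s →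
      P4 a p q r s = P4 a 0 3 1 2 := by
  have mA : ∀ p q r s : Fin 4, p ≠ q → p ≠ r → p ≠ s → q ≠ r → q ≠ s → r ≠ s →
      P4 a p q r s = P4 a p q s r := by
    intro p q r s h1 h2 h3 h4 h5 h6
    have R := rect s r p q h6.symm h3.symm h5.symm h2.symm h4.symm h1
    unfold P4
    linear_combination (a p q * a q p) * R
  have mB : ∀ p q r s : Fin 4, p ≠ q → p ≠ r → p ≠ s → q ≠ r → q ≠ s → r ≠ s →
      P4 a p q r s = P4 a q p r s := by
    intro p q r s h1 h2 h3 h4 h5 h6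
    have R := rect s r p q h6.symm h3.symm h5.symm h2.symm h4.symm h1
    unfold P4
    linear_combination (a p q * a q p) * R
  have mC : ∀ p q r s : Fin 4, p ≠ q → p ≠ r → p ≠ s → q ≠ r → q ≠ s → r ≠ s →
      P4 a p q r s = P4 a p s r q := by
    intro p q r s h1 h2 h3 h4 h5 h6
    have E1 := rect p q s r h1 h3 h2 h5 h4 h6.symm
    have E2 := rect p s q r h3 h1 h2 h5.symm h6.symm h4
    have E3 := rect q s p r h5 h1.symm h4 h3.symm h6.symm h2
    have T := tripleZ (a p q) (a q p) (a p s) (a s p) (a q s) (a s q) (a p r) (a q r) (a s r)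
      (sq q r h4) (sq s r h6.symm) (sq s q h5.symm) (sq q s h5) E1 E2 E3
    unfold P4
    linear_combination (a r p) * T
  intro p q r s hpq hpr hps hqr hqs hrs
  fin_cases p <;> fin_cases q <;> fin_cases r <;> fin_cases s <;>
    try exact absurd rfl hpq
  all_goals try exact absurd rfl hpr
  all_goals try exact absurd rfl hps
  all_goals try exact absurd rfl hqr
  all_goals try exact absurd rfl hqs
  all_goals try exact absurd rfl hrs
  exact ((mC 0 1 2 3 (by decide) (by decide) (by decide) (by decide) (by decide) (by decide)).trans ((mA 0 3 2 1 (by decide) (by decide) (by decide) (by decide) (by decide) (by decide)).trans rfl))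
  exact ((mA 0 1 3 2 (by decide) (by decide) (by decide) (by decide) (by decide) (by decide)).trans ((mC 0 1 2 3 (by decide) (by decide) (by decide) (by decide) (by decide) (by decide)).trans ((mA 0 3 2 1 (by decide) (by decide) (by decide) (by decide) (by decide) (by decide)).trans rfl)))
  exact ((mC 0 2 1 3 (by decide) (by decide) (by decide) (by decide) (by decide) (by decide)).trans rfl)
  exact ((mA 0 2 3 1 (by decide) (by decide) (by decide) (by decide) (by decide) (by decide)).trans ((mC 0 2 1 3 (by decide) (by decide) (by decide) (by decide) (by decide) (by decide)).trans rfl))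
  exact rfl
  exact ((mA 0 3 2 1 (by decide) (by decide) (by decide) (by decide) (by decide) (by decide)).trans rfl)
  exact ((mB 1 0 2 3 (by decide) (by decide) (by decide) (by decide) (by decide) (by decide)).trans ((mC 0 1 2 3 (by decide) (by decide) (by decide) (by decide) (by decide) (by decide)).trans ((mA 0 3 2 1 (by decide) (by decide) (by decide) (by decide) (by decide) (by decide)).trans rfl)))
  exact ((mB 1 0 3 2 (by decide) (by decide) (by decide) (by decide) (by decide) (by decide)).trans ((mA 0 1 3 2 (by decide) (by decide) (by decide) (by decide) (by decide) (by decide)).trans ((mC 0 1 2 3 (by decide) (by decide) (by decide) (by decide) (by decide) (by decide)).trans ((mA 0 3 2 1 (by decide) (by decide) (by decide) (by decide) (by decide) (by decide)).trans rfl))))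
  exact ((mC 1 2 0 3 (by decide) (by decide) (by decide) (by decide) (by decide) (by decide)).trans ((mB 1 3 0 2 (by decide) (by decide) (by decide) (by decide) (by decide) (by decide)).trans ((mA 3 1 0 2 (by decide) (by decide) (by decide) (by decide) (by decide) (by decide)).trans ((mC 3 1 2 0 (by decide) (by decide) (by decide) (by decide) (by decide) (by decide)).trans ((mB 3 0 2 1 (by decide) (by decide) (by decide) (by decide) (by decide) (by decide)).trans ((mA 0 3 2 1 (by decide) (by decide) (by decide) (by decide) (by decide) (by decide)).trans rfl))))))
  exact ((mC 1 2 3 0 (by decide) (by decide) (by decide) (by decide) (by decide) (by decide)).trans ((mB 1 0 3 2 (by decide) (by decide) (by decide) (by decide) (by decide) (by decide)).trans ((mA 0 1 3 2 (by decide) (by decide) (by decide) (by decide) (by decide) (by decide)).trans ((mC 0 1 2 3 (by decide) (by decide) (by decide) (by decide) (by decide) (by decide)).trans ((mA 0 3 2 1 (by decide) (by decide) (by decide) (by decide) (by decide) (by decide)).trans rfl)))))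
  exact ((mB 1 3 0 2 (by decide) (by decide) (by decide) (by decide) (by decide) (by decide)).trans ((mA 3 1 0 2 (by decide) (by decide) (by decide) (by decide) (by decide) (by decide)).trans ((mC 3 1 2 0 (by decide) (by decide) (by decide) (by decide) (by decide) (by decide)).trans ((mB 3 0 2 1 (by decide) (by decide) (by decide) (by decide) (by decide) (by decide)).trans ((mA 0 3 2 1 (by decide) (by decide) (by decide) (by decide) (by decide) (by decide)).trans rfl)))))
  exact ((mB 1 3 2 0 (by decide) (by decide) (by decide) (by decide) (by decide) (by decide)).trans ((mC 3 1 2 0 (by decide) (by decide) (by decide) (by decide) (by decide) (by decide)).trans ((mB 3 0 2 1 (by decide) (by decide) (by decide) (by decide) (by decide) (by decide)).trans ((mA 0 3 2 1 (by decide) (by decide) (by decide) (by decide) (by decide) (by decide)).trans rfl))))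
  exact ((mB 2 0 1 3 (by decide) (by decide) (by decide) (by decide) (by decide) (by decide)).trans ((mC 0 2 1 3 (by decide) (by decide) (by decide) (by decide) (by decide) (by decide)).trans rfl))
  exact ((mB 2 0 3 1 (by decide) (by decide) (by decide) (by decide) (by decide) (by decide)).trans ((mA 0 2 3 1 (by decide) (by decide) (by decide) (by decide) (by decide) (by decide)).trans ((mC 0 2 1 3 (by decide) (by decide) (by decide) (by decide) (by decide) (by decide)).trans rfl)))
  exact ((mC 2 1 0 3 (by decide) (by decide) (by decide) (by decide) (by decide) (by decide)).trans ((mB 2 3 0 1 (by decide) (by decide) (by decide) (by decide) (by decide) (by decide)).trans ((mA 3 2 0 1 (by decide) (by decide) (by decide) (by decide) (by decide) (by decide)).trans ((mC 3 2 1 0 (by decide) (by decide) (by decide) (by decide) (by decide) (by decide)).trans ((mB 3 0 1 2 (by decide) (by decide) (by decide) (by decide) (by decide) (by decide)).trans rfl)))))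
  exact ((mC 2 1 3 0 (by decide) (by decide) (by decide) (by decide) (by decide) (by decide)).trans ((mB 2 0 3 1 (by decide) (by decide) (by decide) (by decide) (by decide) (by decide)).trans ((mA 0 2 3 1 (by decide) (by decide) (by decide) (by decide) (by decide) (by decide)).trans ((mC 0 2 1 3 (by decide) (by decide) (by decide) (by decide) (by decide) (by decide)).trans rfl))))
  exact ((mB 2 3 0 1 (by decide) (by decide) (by decide) (by decide) (by decide) (by decide)).trans ((mA 3 2 0 1 (by decide) (by decide) (by decide) (by decide) (by decide) (by decide)).trans ((mC 3 2 1 0 (by decide) (by decide) (by decide) (by decide) (by decide) (by decide)).trans ((mB 3 0 1 2 (by decide) (by decide) (by decide) (by decide) (by decide) (by decide)).trans rfl))))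
  exact ((mB 2 3 1 0 (by decide) (by decide) (by decide) (by decide) (by decide) (by decide)).trans ((mC 3 2 1 0 (by decide) (by decide) (by decide) (by decide) (by decide) (by decide)).trans ((mB 3 0 1 2 (by decide) (by decide) (by decide) (by decide) (by decide) (by decide)).trans rfl)))
  exact ((mB 3 0 1 2 (by decide) (by decide) (by decide) (by decide) (by decide) (by decide)).trans rfl)
  exact ((mB 3 0 2 1 (by decide) (by decide) (by decide) (by decide) (by decide) (by decide)).trans ((mA 0 3 2 1 (by decide) (by decide) (by decide) (by decide) (by decide) (by decide)).trans rfl))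
  exact ((mA 3 1 0 2 (by decide) (by decide) (by decide) (by decide) (by decide) (by decide)).trans ((mC 3 1 2 0 (by decide) (by decide) (by decide) (by decide) (by decide) (by decide)).trans ((mB 3 0 2 1 (by decide) (by decide) (by decide) (by decide) (by decide) (by decide)).trans ((mA 0 3 2 1 (by decide) (by decide) (by decide) (by decide) (by decide) (by decide)).trans rfl))))
  exact ((mC 3 1 2 0 (by decide) (by decide) (by decide) (by decide) (by decide) (by decide)).trans ((mB 3 0 2 1 (by decide) (by decide) (by decide) (by decide) (by decide) (by decide)).trans ((mA 0 3 2 1 (by decide) (by decide) (by decide) (by decide) (by decide) (by decide)).trans rfl)))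
  exact ((mA 3 2 0 1 (by decide) (by decide) (by decide) (by decide) (by decide) (by decide)).trans ((mC 3 2 1 0 (by decide) (by decide) (by decide) (by decide) (by decide) (by decide)).trans ((mB 3 0 1 2 (by decide) (by decide) (by decide) (by decide) (by decide) (by decide)).trans rfl)))
  exact ((mC 3 2 1 0 (by decide) (by decide) (by decide) (by decide) (by decide) (by decide)).trans ((mB 3 0 1 2 (by decide) (by decide) (by decide) (by decide) (by decide) (by decide)).trans rfl))

/-- For mutually orthogonal roots β₁,…,β₄ of α-height 1 in a simply-laced
root system, writing a_{ij} = c_{βᵢ,βⱼ−ρ}: each a_{ij} (i≠j) is ±1, the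
exchange relations hold, and the product a_{σ1σ4}a_{σ2σ1}a_{σ3σ4}a_{σ4σ1}
is independent of the permutation σ. -/
theorem stmt16 {ι V : Type*} [Fintype ι] [NormedAddCommGroup V] [InnerProductSpace ℝ V]
    (S : BasedRootSystem ι V)
    (hsl : ∀ β ∈ S.Ψ, S.IsLong β)
    (c : V → V → ℤ)
    (hanti : ∀ β ∈ S.Ψ, ∀ γ ∈ S.Ψ, c β γ = - c γ β)
    (hcyc : ∀ β ∈ S.Ψ, ∀ γ ∈ S.Ψ, ∀ δ ∈ S.Ψ,
      β + γ + δ = 0 → c β γ = c γ δ ∧ c γ δ = c δ β)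
    (hpm : ∀ β ∈ S.Ψ, ∀ γ ∈ S.Ψ, β + γ ∈ S.Ψ → c β γ = 1 ∨ c β γ = -1)
    (hzero : ∀ β γ : V, β + γ ∉ S.Ψ → c β γ = 0)
    (h4 : ∀ β ∈ S.Ψ, ∀ γ ∈ S.Ψ, ∀ δ ∈ S.Ψ, ∀ ε ∈ S.Ψ,
      β + γ + δ + ε = 0 →
      β ≠ -γ → β ≠ -δ → β ≠ -ε → γ ≠ -δ → γ ≠ -ε → δ ≠ -ε →
      c β γ * c δ ε + c γ δ * c β ε + c δ β * c γ ε = 0)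
    (β : Fin 4 → V) (hβ : ∀ i, β i ∈ S.Ψ)
    (hht : ∀ i, S.pair (β i) S.ρ = 1)
    (horth : ∀ i j, i ≠ j → ⟪β i, β j⟫ = 0)
    (hdiff : ∀ i j, i ≠ j → β i + β j - S.ρ ∈ S.Ψ)
    (hnotroot : ∀ i j, i ≠ j → β i + β j ∉ S.Ψ)
    (a : Fin 4 → Fin 4 → ℤ) (ha : ∀ i j, a i j = c (β i) (β j - S.ρ)) :
    (∀ i j, i ≠ j → a i j = 1 ∨ a i j = -1) ∧
    (∀ i j k l : Fin 4, i ≠ j → i ≠ k → i ≠ l → j ≠ k → j ≠ l → k ≠ l →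
      a j k * a i l = a i k * a j l ∧ a i k * a j k = a i l * a j l) ∧
    (∀ σ : Equiv.Perm (Fin 4),
      a (σ 0) (σ 3) * a (σ 1) (σ 0) * a (σ 2) (σ 3) * a (σ 3) (σ 0)
        = a 0 3 * a 1 0 * a 2 3 * a 3 0) := by
  classical
  have hρρ : ⟪S.ρ, S.ρ⟫ ≠ 0 := by
    rw [ne_eq, inner_self_eq_zero]
    exact S.ne_zero _ S.rho_mem
  have hiρ : ∀ i, ⟪β i, S.ρ⟫ = ⟪S.ρ, S.ρ⟫ / 2 := by
    intro i
    have h := hht i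
    simp only [BasedRootSystem.pair] at h
    field_simp at h
    linarith
  have hii : ∀ i, ⟪β i, β i⟫ = ⟪S.ρ, S.ρ⟫ := fun i => hsl _ (hβ i)
  have hcomm : ∀ i, ⟪S.ρ, β i⟫ = ⟪β i, S.ρ⟫ := fun i => real_inner_comm _ _
  have key : ⟪(β 0 + β 1 + β 2 + β 3) - (2:ℝ) • S.ρ,
      (β 0 + β 1 + β 2 + β 3) - (2:ℝ) • S.ρ⟫ = 0 := by
    simp only [inner_sub_left, inner_sub_right, inner_add_left, inner_add_right,
      real_inner_smul_left, real_inner_smul_right]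
    rw [hcomm 0, hcomm 1, hcomm 2, hcomm 3]
    linarith [hiρ 0, hiρ 1, hiρ 2, hiρ 3, hii 0, hii 1, hii 2, hii 3,
      horth 0 1 (by decide), horth 0 2 (by decide), horth 0 3 (by decide),
      horth 1 0 (by decide), horth 1 2 (by decide), horth 1 3 (by decide),
      horth 2 0 (by decide), horth 2 1 (by decide), horth 2 3 (by decide),
      horth 3 0 (by decide), horth 3 1 (by decide), horth 3 2 (by decide)]
  have hsum : β 0 + β 1 + β 2 + β 3 = (2:ℝ) • S.ρ := by
    have h0 : (β 0 + β 1 + β 2 + β 3) - (2:ℝ) • S.ρ = 0 := by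
      rwa [inner_self_eq_zero] at key
    rwa [sub_eq_zero] at h0
  have sum4 : ∀ i j k l : Fin 4, i ≠ j → i ≠ k → i ≠ l → j ≠ k → j ≠ l → k ≠ l →
      β i + β j + β k + β l = (2:ℝ) • S.ρ := by
    intro i j k l hij hik hil hjk hjl hkl
    have huniv : ({i, j, k, l} : Finset (Fin 4)) = Finset.univ := by
      apply Finset.eq_univ_of_card
      rw [Finset.card_insert_of_notMem (by simp [hij, hik, hil]),
        Finset.card_insert_of_notMem (by simp [hjk, hjl]), Finset.card_pair hkl]
      simp
    have hs : ∑ t ∈ ({i, j, k, l} : Finset (Fin 4)), β t = β i + β j + β k + β l := by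
      rw [Finset.sum_insert (by simp [hij, hik, hil]),
        Finset.sum_insert (by simp [hjk, hjl]), Finset.sum_pair hkl]
      abel
    calc β i + β j + β k + β l = ∑ t ∈ ({i, j, k, l} : Finset (Fin 4)), β t := hs.symm
      _ = ∑ t, β t := by rw [huniv]
      _ = β 0 + β 1 + β 2 + β 3 := by rw [Fin.sum_univ_four]
      _ = (2:ℝ) • S.ρ := hsum
  have hsub : ∀ j, β j - S.ρ ∈ S.Ψ := by
    intro j
    have h := S.reflect_mem S.ρ S.rho_mem (β j) (hβ j)
    have hc : 2 * ⟪S.ρ, β j⟫ / ⟪β j, β j⟫ = 1 := by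
      rw [hcomm j, hiρ j, hii j]
      field_simp
    rw [hc, one_smul] at h
    have := S.neg_mem _ h
    rwa [neg_sub] at this
  have n1 : ∀ i j, i ≠ j → β i ≠ -β j := by
    intro i j hij h
    have h0 := horth i j hij
    rw [h, inner_neg_left, hii j] at h0
    exact hρρ (by linarith)
  have n2 : ∀ i j, i ≠ j → β i ≠ -(β j - S.ρ) := by
    intro i j hij h
    apply hnotroot i j hij
    have e : β i + β j = S.ρ := by rw [h]; abel
    rw [e]; exact S.rho_mem
  have pm : ∀ i j, i ≠ j → a i j = 1 ∨ a i j = -1 := by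
    intro i j hij
    rw [ha]
    refine hpm _ (hβ i) _ (hsub j) ?_
    have := hdiff i j hij
    rwa [← add_sub_assoc]
  have sq : ∀ i j : Fin 4, i ≠ j → a i j * a i j = 1 := by
    intro i j hij
    rcases pm i j hij with h | h <;> rw [h] <;> norm_num
  have rect : ∀ i j k l : Fin 4, i ≠ j → i ≠ k → i ≠ l → j ≠ k → j ≠ l → k ≠ l →
      a j k * a i l = a i k * a j l := by
    intro i j k l hij hik hil hjk hjl hkl
    have hs4 := sum4 i j k l hij hik hil hjk hjl hkl
    have n3 : β k - S.ρ ≠ -(β l - S.ρ) := by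
      intro h
      have : β i = -β j := by linear_combination (norm := module) hs4 - h
      exact n1 i j hij this
    have h := h4 (β i) (hβ i) (β j) (hβ j) (β k - S.ρ) (hsub k) (β l - S.ρ) (hsub l)
      (by linear_combination (norm := module) hs4)
      (n1 i j hij) (n2 i k hik) (n2 i l hil) (n2 j k hjk) (n2 j l hjl) n3
    have hz : c (β i) (β j) = 0 := hzero _ _ (hnotroot i j hij)
    have hA : c (β k - S.ρ) (β i) = - c (β i) (β k - S.ρ) := hanti _ (hsub k) _ (hβ i)
    rw [hz, hA] at h
    rw [ha i k, ha i l, ha j k, ha j l]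
    linarith
  refine ⟨pm, ?_, ?_⟩
  · intro i j k l hij hik hil hjk hjl hkl
    refine ⟨rect i j k l hij hik hil hjk hjl hkl, ?_⟩
    have R := rect i j k l hij hik hil hjk hjl hkl
    have Sjk := sq j k hjk
    have Sjl := sq j l hjl
    linear_combination (-(a j k * a j l)) * R + (a i l * a j l) * Sjk
      + (-(a i k * a j k)) * Sjl
  · intro σ
    have hinj := σ.injective
    exact perm_inv a sq rect (σ 0) (σ 3) (σ 1) (σ 2)
      (hinj.ne (by decide)) (hinj.ne (by decide)) (hinj.ne (by decide))
      (hinj.ne (by decide)) (hinj.ne (by decide)) (hinj.ne (by decide))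
end
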